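/- arXiv:2104.07933 — 11 statements merged into one kernel-verified Lean document; each statement's English description precedes it below -/
import Mathlib

section
/- The sequence (b_k) is strictly positive: b_k > 0 for every k ≥ 0. -/
/-- Fix `q ∈ (0,1)` and reals `a, b > 0`. Set `κ = a + b`, `μ = a·b`, and
`c k = (1 − q^(2k))^(−1/2)` for `k ≥ 1`. Define `(B k)` by `B 0 = 1`,
`B 1 = κ c 1`, and `B (k+1) = κ c (k+1) B k − μ (c (k+1) / c k) B (k−1)` for `k ≥ 1`.
Then `B k > 0` for every `k`. -/
theorem positivity_of_recurrence_sequence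
    (q a b : ℝ) (hq0 : 0 < q) (hq1 : q < 1) (ha : 0 < a) (hb : 0 < b)
    (c : ℕ → ℝ) (hc : ∀ k : ℕ, 1 ≤ k → c k = (Real.sqrt (1 - q ^ (2 * k)))⁻¹)
    (B : ℕ → ℝ) (hB0 : B 0 = 1) (hB1 : B 1 = (a + b) * c 1)
    (hBrec : ∀ k : ℕ, 1 ≤ k →
      B (k + 1) = (a + b) * c (k + 1) * B k - (a * b) * (c (k + 1) / c k) * B (k - 1)) :
    ∀ k : ℕ, 0 < B k := by
  have hc1 : ∀ k : ℕ, 1 ≤ k → 1 ≤ c k := by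
    intro k hk
    have hpow : q ^ (2 * k) < 1 := pow_lt_one₀ hq0.le hq1 (by omega)
    have hpos : 0 < 1 - q ^ (2 * k) := by linarith
    have hle : (1 : ℝ) - q ^ (2 * k) ≤ 1 := by
      have : 0 < q ^ (2 * k) := by positivity
      linarith
    rw [hc k hk]
    have hs0 : 0 < Real.sqrt (1 - q ^ (2 * k)) := Real.sqrt_pos.mpr hpos
    have hs1 : Real.sqrt (1 - q ^ (2 * k)) ≤ 1 := Real.sqrt_le_one.mpr hle
    exact (le_inv_comm₀ one_pos hs0).mpr (by simpa using hs1)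
  have hcpos : ∀ k : ℕ, 1 ≤ k → 0 < c k := fun k hk => lt_of_lt_of_le one_pos (hc1 k hk)
  have key : ∀ k : ℕ, 0 < B k ∧ a * c (k + 1) * B k ≤ B (k + 1) := by
    intro k
    induction k with
    | zero =>
      constructor
      · rw [hB0]; norm_num
      · rw [hB0, hB1]
        have := hcpos 1 le_rfl
        nlinarith
    | succ n ih =>
      obtain ⟨hBn, hstep⟩ := ih
      have hcn1 : 1 ≤ c (n + 1) := hc1 (n + 1) (by omega)
      have hcn1p : 0 < c (n + 1) := hcpos (n + 1) (by omega)
      have hcn2p : 0 < c (n + 2) := hcpos (n + 2) (by omega)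
      have hBn1 : 0 < B (n + 1) := lt_of_lt_of_le (by positivity) hstep
      refine ⟨hBn1, ?_⟩
      have hrec := hBrec (n + 1) (by omega)
      simp only [Nat.add_sub_cancel] at hrec
      rw [hrec]
      -- need: a*c(n+2)*B(n+1) ≤ (a+b)*c(n+2)*B(n+1) - a*b*(c(n+2)/c(n+1))*B n
      -- i.e. b*c(n+2)*B(n+1) ≥ a*b*(c(n+2)/c(n+1))*B n
      have h1 : a * B n / c (n + 1) ≤ a * c (n + 1) * B n := by
        rw [div_le_iff₀ hcn1p]
        nlinarith [mul_pos ha hBn, sq_nonneg (c (n + 1) - 1)]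
      have h2 : a * b * (c (n + 2) / c (n + 1)) * B n ≤ b * c (n + 2) * B (n + 1) := by
        have h3 : a * B n / c (n + 1) ≤ B (n + 1) := le_trans h1 hstep
        have : a * b * (c (n + 2) / c (n + 1)) * B n
            = b * c (n + 2) * (a * B n / c (n + 1)) := by ring
        rw [this]
        exact mul_le_mul_of_nonneg_left h3 (by positivity)
      linarith
  exact fun k => (key k).1
end

section
/- The ratios b_k / b_{k−1} converge, and lim_{k→∞} b_k / b_{k−1} = max(a, b). -/
/-!
Write `κ = m + n`, `μ = m n` with `m = max a b`, `n = min a b`. The normalized ratios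
`r k = B (k + 1) / (c (k + 1) B k)` satisfy `r (k + 1) = κ - μ (1 - ε k) / r k` with
`ε k = q ^ (2 (k + 1)) → 0`, because `c (k + 1)⁻² = 1 - ε k`. Since `κ - μ / m = m`,
induction gives `r k ≥ m`. Passing to the limsup `L` of `r`, the recurrence yields
`L ≤ κ - μ / L`, that is `(L - m) (L - n) ≤ 0`, hence `L ≤ m`; so `r k → m`, and
`c (k + 1) → 1` finishes the proof.
-/

open Filter Topology

noncomputable def perturbedRatio (κ μ : ℝ) (ε : ℕ → ℝ) : ℕ → ℝ
  | 0 => κ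
  | k + 1 => κ - μ * (1 - ε k) / perturbedRatio κ μ ε k

section PerturbedRatio

variable {m n : ℝ} {ε : ℕ → ℝ}

theorem le_perturbedRatio (hn : 0 < n) (hnm : n ≤ m) (hε0 : ∀ k, 0 ≤ ε k) (k : ℕ) :
    m ≤ perturbedRatio (m + n) (m * n) ε k := by
  induction k with
  | zero => simp only [perturbedRatio]; linarith
  | succ k ih =>
    have hdiv : m * n * (1 - ε k) / perturbedRatio (m + n) (m * n) ε k ≤ n := by
      rw [div_le_iff₀ (by linarith)]
      nlinarith [mul_nonneg (mul_nonneg (hn.le.trans hnm) hn.le) (hε0 k)]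
    rw [perturbedRatio]
    linarith

theorem isBoundedUnder_le_perturbedRatio (hn : 0 < n) (hnm : n ≤ m) (hε0 : ∀ k, 0 ≤ ε k)
    (hε1 : ∀ k, ε k ≤ 1) :
    IsBoundedUnder (· ≤ ·) atTop (perturbedRatio (m + n) (m * n) ε) := by
  refine isBoundedUnder_of_eventually_le (a := m + n) (eventually_atTop.2 ⟨1, fun k hk => ?_⟩)
  obtain ⟨k, rfl⟩ := Nat.exists_eq_add_of_le' hk
  have hrk := le_perturbedRatio hn hnm hε0 k
  have hdiv : 0 ≤ m * n * (1 - ε k) / perturbedRatio (m + n) (m * n) ε k := by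
    have : 0 ≤ m * n * (1 - ε k) :=
      mul_nonneg (mul_nonneg (hn.le.trans hnm) hn.le) (sub_nonneg.2 (hε1 k))
    exact div_nonneg this (by linarith)
  rw [perturbedRatio]
  linarith

theorem limsup_perturbedRatio_le (hn : 0 < n) (hnm : n ≤ m) (hε0 : ∀ k, 0 ≤ ε k)
    (hε1 : ∀ k, ε k ≤ 1) (hε : Tendsto ε atTop (𝓝 0)) :
    limsup (perturbedRatio (m + n) (m * n) ε) atTop ≤ m := by
  set r := perturbedRatio (m + n) (m * n) ε
  have hm : 0 < m := hn.trans_le hnm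
  have hlow := le_perturbedRatio hn hnm hε0
  have hbdd := isBoundedUnder_le_perturbedRatio hn hnm hε0 hε1
  have hcobdd : IsCoboundedUnder (· ≤ ·) atTop r := isCoboundedUnder_le_of_le atTop hlow
  -- a monotone extension of `x ↦ m + n - m n / x` from `[m, ∞)`, where `r` takes its values
  set f : ℝ → ℝ := fun x => m + n - m * n / max x m
  have hf : Monotone f := fun x y hxy => by simp only [f]; gcongr
  set e : ℕ → ℝ := fun k => m * n * ε k / r k
  have hshift : (fun k => r (k + 1)) = f ∘ r + e := by
    funext k
    have := (hm.trans_le (hlow k)).ne'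
    simp only [r, f, e, perturbedRatio, Function.comp_apply, Pi.add_apply, max_eq_left (hlow k)]
    field_simp
    ring
  have he : Tendsto e atTop (𝓝 0) := by
    refine squeeze_zero (fun k => ?_) (fun k => ?_) (by simpa using hε.const_mul n)
    · have := hε0 k; have := hm.trans_le (hlow k); positivity
    · rw [div_le_iff₀ (hm.trans_le (hlow k))]
      nlinarith [mul_nonneg hn.le (hε0 k), hlow k]
  set L := limsup r atTop
  have hmL : m ≤ L := le_limsup_of_le hbdd fun b hb =>
    let ⟨k, hk⟩ := hb.exists; (hlow k).trans hk
  have hfL : L ≤ f L := calc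
    L = limsup (fun k => r (k + 1)) atTop := (limsup_nat_add r 1).symm
    _ = limsup (f ∘ r + e) atTop := by rw [hshift]
    _ ≤ limsup (f ∘ r) atTop + limsup e atTop :=
      limsup_add_le (hf.isBoundedUnder_ge_comp (isBoundedUnder_of ⟨m, hlow⟩))
        (hf.isBoundedUnder_le_comp hbdd) he.isCoboundedUnder_le he.isBoundedUnder_le
    _ = f L := by
      rw [he.limsup_eq, add_zero, hf.map_limsup_of_continuousAt r _ hbdd hcobdd]
      exact Continuous.continuousAt
        (by fun_prop (disch := exact fun x => (lt_max_of_lt_right hm).ne'))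
  simp only [f, max_eq_left hmL] at hfL
  rw [le_sub_iff_add_le, ← le_sub_iff_add_le', div_le_iff₀ (hm.trans_le hmL)] at hfL
  nlinarith

theorem tendsto_perturbedRatio (hn : 0 < n) (hnm : n ≤ m) (hε0 : ∀ k, 0 ≤ ε k)
    (hε1 : ∀ k, ε k ≤ 1) (hε : Tendsto ε atTop (𝓝 0)) :
    Tendsto (perturbedRatio (m + n) (m * n) ε) atTop (𝓝 m) :=
  tendsto_order.2
    ⟨fun _ ha => .of_forall fun k => ha.trans_le (le_perturbedRatio hn hnm hε0 k),
      fun _ ha => eventually_lt_of_limsup_lt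
        ((limsup_perturbedRatio_le hn hnm hε0 hε1 hε).trans_lt ha)
        (isBoundedUnder_le_perturbedRatio hn hnm hε0 hε1)⟩

end PerturbedRatio

section Recurrence

variable {κ μ : ℝ} {ε c B : ℕ → ℝ}

theorem succ_eq_mul_perturbedRatio (hc : ∀ k, c (k + 1) ^ 2 * (1 - ε k) = 1)
    (hr : ∀ k, perturbedRatio κ μ ε k ≠ 0) (hB1 : B 1 = κ * c 1 * B 0)
    (hB : ∀ k, B (k + 2) = κ * c (k + 2) * B (k + 1) - μ * (c (k + 2) / c (k + 1)) * B k)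
    (k : ℕ) : B (k + 1) = c (k + 1) * perturbedRatio κ μ ε k * B k := by
  induction k with
  | zero => rw [hB1, perturbedRatio]; ring
  | succ k ih =>
    have hck : c (k + 1) ≠ 0 := ne_zero_pow two_ne_zero (left_ne_zero_of_mul_eq_one (hc k))
    rw [hB, ih, perturbedRatio]
    field_simp [hr k]
    linear_combination c (k + 2) * B k * μ * hc k

theorem div_eq_mul_perturbedRatio (hc : ∀ k, c (k + 1) ^ 2 * (1 - ε k) = 1)
    (hr : ∀ k, perturbedRatio κ μ ε k ≠ 0) (hB0 : B 0 ≠ 0) (hB1 : B 1 = κ * c 1 * B 0)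
    (hB : ∀ k, B (k + 2) = κ * c (k + 2) * B (k + 1) - μ * (c (k + 2) / c (k + 1)) * B k)
    (k : ℕ) : B (k + 1) / B k = c (k + 1) * perturbedRatio κ μ ε k := by
  have hsucc := succ_eq_mul_perturbedRatio hc hr hB1 hB
  have hne : ∀ k, B k ≠ 0 := fun k => by
    induction k with
    | zero => exact hB0
    | succ k ih =>
      rw [hsucc]
      exact mul_ne_zero (mul_ne_zero
        (ne_zero_pow two_ne_zero (left_ne_zero_of_mul_eq_one (hc k))) (hr k)) ih
  rw [hsucc, mul_div_cancel_right₀ _ (hne k)]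

end Recurrence

theorem inv_sqrt_one_sub_sq_mul {x : ℝ} (hx : x < 1) : (√(1 - x))⁻¹ ^ 2 * (1 - x) = 1 := by
  rw [inv_pow, Real.sq_sqrt (by linarith)]
  exact inv_mul_cancel₀ (by linarith)

theorem tendsto_inv_sqrt_one_sub {ι : Type*} {l : Filter ι} {ε : ι → ℝ}
    (hε : Tendsto ε l (𝓝 0)) : Tendsto (fun i => (√(1 - ε i))⁻¹) l (𝓝 1) := by
  simpa using ((hε.const_sub 1).sqrt).inv₀ (by simp)

/-- Fix `q ∈ (0,1)` and reals `a, b > 0`. Set `κ = a + b`, `μ = a·b`, and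
`c k = (1 − q^(2k))^(−1/2)` for `k ≥ 1`. Define `(B k)` by `B 0 = 1`,
`B 1 = κ c 1`, and `B (k+1) = κ c (k+1) B k − μ (c (k+1) / c k) B (k−1)` for `k ≥ 1`.
Then the ratios `B k / B (k-1)` converge to `max a b`. -/
theorem ratio_limit_of_recurrence_sequence
    (q a b : ℝ) (hq0 : 0 < q) (hq1 : q < 1) (ha : 0 < a) (hb : 0 < b)
    (c : ℕ → ℝ) (hc : ∀ k : ℕ, 1 ≤ k → c k = (Real.sqrt (1 - q ^ (2 * k)))⁻¹)
    (B : ℕ → ℝ) (hB0 : B 0 = 1) (hB1 : B 1 = (a + b) * c 1)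
    (hBrec : ∀ k : ℕ, 1 ≤ k →
      B (k + 1) = (a + b) * c (k + 1) * B k - (a * b) * (c (k + 1) / c k) * B (k - 1)) :
    Filter.Tendsto (fun k : ℕ => B (k + 1) / B k) Filter.atTop (nhds (max a b)) := by
  set ε : ℕ → ℝ := fun k => q ^ (2 * (k + 1))
  have hε0 : ∀ k, 0 ≤ ε k := fun k => by positivity
  have hε1 : ∀ k, ε k < 1 := fun k => pow_lt_one₀ hq0.le hq1 (by omega)
  have hε : Tendsto ε atTop (𝓝 0) := (tendsto_pow_atTop_nhds_zero_of_lt_one hq0.le hq1).comp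
    (tendsto_atTop_mono (fun k => show k ≤ 2 * (k + 1) by omega) tendsto_id)
  have hc' : ∀ k, c (k + 1) = (√(1 - ε k))⁻¹ := fun k => hc (k + 1) (by omega)
  have hcsq : ∀ k, c (k + 1) ^ 2 * (1 - ε k) = 1 := fun k =>
    hc' k ▸ inv_sqrt_one_sub_sq_mul (hε1 k)
  have hcl : Tendsto (fun k => c (k + 1)) atTop (𝓝 1) := by
    simpa only [hc'] using tendsto_inv_sqrt_one_sub hε
  have hmin : 0 < min a b := lt_min ha hb
  have hκ : a + b = max a b + min a b := by rw [add_comm (max a b), min_add_max]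
  have hμ : a * b = max a b * min a b := by rw [mul_comm (max a b), min_mul_max]
  rw [hκ, hμ] at hBrec
  rw [hκ] at hB1
  have hratio := div_eq_mul_perturbedRatio (B := B) hcsq
    (fun k => (hmin.trans_le (min_le_max.trans (le_perturbedRatio hmin min_le_max hε0 k))).ne')
    (hB0 ▸ one_ne_zero) (by rw [hB0, hB1, mul_one])
    (fun k => by simpa using hBrec (k + 1) (by omega))
  have hlim := hcl.mul (tendsto_perturbedRatio hmin min_le_max hε0 (fun k => (hε1 k).le) hε)
  rw [one_mul] at hlim
  exact hlim.congr fun k => (hratio k).symm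
end

section
/- The sequence (q^{−k} b_k)_{k≥0} is square summable (i.e., Σ_{k≥0} q^{−2k} b_k² < ∞) if and only if max(a, b) < q. -/
/-!
Dividing `b_k` by `c_1 ⋯ c_k` turns the recurrence into
`d_{k+2} = (a + b) d_{k+1} - ab (1 - q^{2(k+1)}) d_k`, a summable perturbation of the recurrence
with characteristic roots `a` and `b`. With `m = max a b ≥ n = min a b`, the differences
`e_k = d_{k+1} - m d_k` satisfy `e_{k+1} = n e_k + mn q^{2(k+1)} d_k ≥ 0`, which gives
`m^k ≤ d_k ≤ C (k + 1) m^k`. The products `c_1 ⋯ c_k` stay between `1` and a constant, so `b_k`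
obeys the same two-sided bound, and `∑ q^{-2k} b_k^2` converges exactly when `m < q`.
-/

open Finset Real

lemma Real.prod_one_add_le_exp_tsum {ι : Type*} {f : ι → ℝ} (hf : ∀ i, 0 ≤ f i) (hs : Summable f)
    (s : Finset ι) : ∏ i ∈ s, (1 + f i) ≤ exp (∑' i, f i) :=
  (prod_one_add_le_exp_sum s hf).trans (exp_le_exp.mpr (hs.sum_le_tsum s fun i _ ↦ hf i))

structure PerturbedRecurrence (m n : ℝ) (x d : ℕ → ℝ) : Prop where
  zero : d 0 = 1
  one : d 1 = m + n
  succ_succ : ∀ k, d (k + 2) = (m + n) * d (k + 1) - m * n * (1 - x (k + 1)) * d k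

namespace PerturbedRecurrence

variable {m n : ℝ} {x d : ℕ → ℝ}

lemma sub_mul_succ_succ (h : PerturbedRecurrence m n x d) (k : ℕ) :
    d (k + 2) - m * d (k + 1) = n * (d (k + 1) - m * d k) + m * n * x (k + 1) * d k := by
  rw [h.succ_succ]; ring

lemma pow_le_and_mul_le_succ (h : PerturbedRecurrence m n x d) (hm : 0 ≤ m) (hn : 0 ≤ n)
    (hx : ∀ k, 0 ≤ x k) (k : ℕ) : m ^ k ≤ d k ∧ m * d k ≤ d (k + 1) := by
  induction k with
  | zero => simp [h.zero, h.one, hn]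
  | succ k ih =>
    obtain ⟨hpow, hstep⟩ := ih
    have hd : 0 ≤ d k := (pow_nonneg hm k).trans hpow
    refine ⟨by rw [pow_succ']; exact (mul_le_mul_of_nonneg_left hpow hm).trans hstep, ?_⟩
    have : 0 ≤ n * (d (k + 1) - m * d k) + m * n * x (k + 1) * d k := by
      have hxk := hx (k + 1)
      have he : 0 ≤ d (k + 1) - m * d k := sub_nonneg.mpr hstep
      positivity
    linarith [h.sub_mul_succ_succ k]

lemma le_mul_pow_mul_prod (h : PerturbedRecurrence m n x d) (hn : 0 ≤ n) (hnm : n ≤ m)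
    (hx : ∀ k, 0 ≤ x k) (k : ℕ) : d k ≤ (k + 1) * m ^ k * ∏ j ∈ range k, (1 + j * x j) := by
  have hm : 0 ≤ m := hn.trans hnm
  set D : ℕ → ℝ := fun k ↦ ∏ j ∈ range k, (1 + j * x j)
  have hD : ∀ k, 0 ≤ D k := fun k ↦ prod_nonneg fun j _ ↦ by have := hx j; positivity
  have hD_succ : ∀ k, D (k + 1) = D k * (1 + k * x k) := fun k ↦ prod_range_succ _ k
  have hD_mono : ∀ k, D k ≤ D (k + 1) := fun k ↦ by
    rw [hD_succ]
    exact le_mul_of_one_le_right (hD k) (le_add_of_nonneg_right (mul_nonneg k.cast_nonneg (hx k)))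
  suffices ∀ k, d (k + 1) - m * d k ≤ m ^ (k + 1) * D (k + 1) ∧ d k ≤ (k + 1) * m ^ k * D k from
    (this k).2
  intro k
  induction k with
  | zero => simp [D, h.zero, h.one, hnm]
  | succ k ih =>
    obtain ⟨he, hd⟩ := ih
    obtain ⟨hpow, hstep⟩ := h.pow_le_and_mul_le_succ hm hn hx k
    have hd0 : 0 ≤ d k := (pow_nonneg hm k).trans hpow
    have he0 : 0 ≤ d (k + 1) - m * d k := sub_nonneg.mpr hstep
    refine ⟨?_, ?_⟩
    · have hxk := hx (k + 1)
      calc d (k + 2) - m * d (k + 1) = n * (d (k + 1) - m * d k) + m * n * x (k + 1) * d k :=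
            h.sub_mul_succ_succ k
        _ ≤ m * (m ^ (k + 1) * D (k + 1)) + m * m * x (k + 1) * ((k + 1) * m ^ k * D k) := by
            gcongr
        _ = m ^ (k + 2) * (D (k + 1) + (k + 1) * x (k + 1) * D k) := by ring
        _ ≤ m ^ (k + 2) * (D (k + 1) + (k + 1) * x (k + 1) * D (k + 1)) := by
            gcongr
            exact hD_mono k
        _ = m ^ (k + 2) * D (k + 2) := by rw [hD_succ (k + 1)]; push_cast; ring
    · calc d (k + 1) = m * d k + (d (k + 1) - m * d k) := by ring
        _ ≤ m * ((k + 1) * m ^ k * D k) + m ^ (k + 1) * D (k + 1) := by gcongr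
        _ ≤ m * ((k + 1) * m ^ k * D (k + 1)) + m ^ (k + 1) * D (k + 1) := by
            gcongr
            exact hD_mono k
        _ = (↑(k + 1) + 1) * m ^ (k + 1) * D (k + 1) := by push_cast; ring

lemma exists_le_mul_pow (h : PerturbedRecurrence m n x d) (hn : 0 ≤ n) (hnm : n ≤ m)
    (hx : ∀ k, 0 ≤ x k) (hsum : Summable fun j ↦ j * x j) :
    ∃ C, ∀ k, d k ≤ C * (k + 1) * m ^ k := by
  refine ⟨exp (∑' j, j * x j), fun k ↦ (h.le_mul_pow_mul_prod hn hnm hx k).trans ?_⟩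
  have hprod := prod_one_add_le_exp_tsum (fun j ↦ mul_nonneg j.cast_nonneg (hx j)) hsum (range k)
  have hm : 0 ≤ m := hn.trans hnm
  calc (k + 1) * m ^ k * ∏ j ∈ range k, (1 + j * x j)
      ≤ (k + 1) * m ^ k * exp (∑' j, j * x j) := by gcongr
    _ = exp (∑' j, j * x j) * (k + 1) * m ^ k := by ring

end PerturbedRecurrence

lemma div_prod_range_add_two_eq {κ μ : ℝ} {c B : ℕ → ℝ} (hc : ∀ k, 1 ≤ k → c k ≠ 0)
    (hB : ∀ k, 1 ≤ k → B (k + 1) = κ * c (k + 1) * B k - μ * (c (k + 1) / c k) * B (k - 1))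
    (k : ℕ) :
    B (k + 2) / ∏ j ∈ range (k + 2), c (j + 1) =
      κ * (B (k + 1) / ∏ j ∈ range (k + 1), c (j + 1)) -
        μ * (c (k + 1) ^ 2)⁻¹ * (B k / ∏ j ∈ range k, c (j + 1)) := by
  have h1 := hc (k + 1) (by omega)
  have h2 := hc (k + 2) (by omega)
  have hP : ∏ j ∈ range k, c (j + 1) ≠ 0 := prod_ne_zero_iff.mpr fun j _ ↦ hc (j + 1) (by omega)
  rw [hB (k + 1) (by omega), prod_range_succ, prod_range_succ, Nat.add_sub_cancel]
  field_simp

lemma one_le_inv_sqrt_one_sub {y : ℝ} (hy0 : 0 ≤ y) (hy1 : y < 1) : 1 ≤ (√(1 - y))⁻¹ :=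
  (one_le_inv₀ (sqrt_pos.mpr (by linarith))).mpr (sqrt_le_one.mpr (by linarith))

lemma inv_sqrt_one_sub_le {y r : ℝ} (hy : 0 ≤ y) (hyr : y ≤ r) (hr : r < 1) :
    (√(1 - y))⁻¹ ≤ 1 + y / (1 - r) := by
  have h1y : 0 < 1 - y := by linarith
  calc (√(1 - y))⁻¹ ≤ (1 - y)⁻¹ :=
        inv_anti₀ h1y ((le_sqrt h1y.le h1y.le).mpr (by nlinarith))
    _ = 1 + y / (1 - y) := by field_simp; ring
    _ ≤ 1 + y / (1 - r) := by gcongr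

lemma exists_prod_inv_sqrt_one_sub_pow_le {q : ℝ} (hq0 : 0 ≤ q) (hq1 : q < 1) :
    ∃ F, ∀ k, ∏ j ∈ range k, (√(1 - q ^ (2 * (j + 1))))⁻¹ ≤ F := by
  have hq2 : q ^ 2 < 1 := pow_lt_one₀ hq0 hq1 two_ne_zero
  have hsum : Summable fun j : ℕ ↦ q ^ (2 * (j + 1)) / (1 - q ^ 2) := by
    refine (((summable_geometric_of_lt_one (sq_nonneg q) hq2).mul_left (q ^ 2)).div_const
      (1 - q ^ 2)).congr fun j ↦ by ring
  refine ⟨exp (∑' j, q ^ (2 * (j + 1)) / (1 - q ^ 2)), fun k ↦ ?_⟩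
  refine (prod_le_prod (fun j _ ↦ by positivity) fun j _ ↦ inv_sqrt_one_sub_le (by positivity)
    ?_ hq2).trans (prod_one_add_le_exp_tsum (fun j ↦ ?_) hsum _)
  · exact pow_le_pow_of_le_one hq0 hq1.le (by omega)
  · have : 0 < 1 - q ^ 2 := by linarith
    positivity

lemma summable_sq_inv_pow_mul_iff {m q C : ℝ} {b : ℕ → ℝ} (hm : 0 ≤ m) (hq : 0 < q)
    (hlow : ∀ k, m ^ k ≤ b k) (hup : ∀ k, b k ≤ C * (k + 1) * m ^ k) :
    Summable (fun k ↦ ((q ^ k)⁻¹ * b k) ^ 2) ↔ m < q := by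
  constructor
  · intro hs
    by_contra! hqm
    have hone : ∀ k, 1 ≤ ((q ^ k)⁻¹ * b k) ^ 2 := fun k ↦ by
      refine one_le_pow₀ ((le_inv_mul_iff₀ (pow_pos hq k)).mpr ?_)
      simpa using (pow_le_pow_left₀ hq.le hqm k).trans (hlow k)
    exact absurd (ge_of_tendsto' hs.tendsto_atTop_zero hone) (by norm_num)
  · intro hmq
    set r := (m / q) ^ 2
    have hr : ‖r‖ < 1 := by
      rw [norm_of_nonneg (by positivity)]
      exact pow_lt_one₀ (by positivity) ((div_lt_one hq).mpr hmq) two_ne_zero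
    have hsum : Summable fun k : ℕ ↦ C ^ 2 * ((k + 1) ^ 2 * r ^ k) := by
      refine (((summable_pow_mul_geometric_of_norm_lt_one 2 hr).add
        ((summable_pow_mul_geometric_of_norm_lt_one 1 hr).mul_left 2)).add
        (summable_geometric_of_norm_lt_one hr)).mul_left (C ^ 2) |>.congr fun k ↦ ?_
      ring
    refine hsum.of_nonneg_of_le (fun k ↦ sq_nonneg _) fun k ↦ ?_
    have hb : 0 ≤ b k := (pow_nonneg hm k).trans (hlow k)
    calc ((q ^ k)⁻¹ * b k) ^ 2 ≤ ((q ^ k)⁻¹ * (C * (k + 1) * m ^ k)) ^ 2 := by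
          gcongr
          exact hup k
      _ = C ^ 2 * ((k + 1) ^ 2 * r ^ k) := by
          simp only [r, div_pow]
          field_simp
          ring

/-- Fix `q ∈ (0,1)` and reals `a, b > 0`. Set `κ = a + b`, `μ = a·b`, and
`c k = (1 − q^(2k))^(−1/2)` for `k ≥ 1`. Define `(B k)` by `B 0 = 1`,
`B 1 = κ c 1`, and `B (k+1) = κ c (k+1) B k − μ (c (k+1) / c k) B (k−1)` for `k ≥ 1`.
Then the sequence `(q^(−k) B k)` is square summable iff `max a b < q`. -/
theorem square_summable_iff_of_recurrence_sequence
    (q a b : ℝ) (hq0 : 0 < q) (hq1 : q < 1) (ha : 0 < a) (hb : 0 < b)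
    (c : ℕ → ℝ) (hc : ∀ k : ℕ, 1 ≤ k → c k = (Real.sqrt (1 - q ^ (2 * k)))⁻¹)
    (B : ℕ → ℝ) (hB0 : B 0 = 1) (hB1 : B 1 = (a + b) * c 1)
    (hBrec : ∀ k : ℕ, 1 ≤ k →
      B (k + 1) = (a + b) * c (k + 1) * B k - (a * b) * (c (k + 1) / c k) * B (k - 1)) :
    Summable (fun k : ℕ => ((q ^ k)⁻¹ * B k) ^ 2) ↔ max a b < q := by
  have hx1 : ∀ k, 1 ≤ k → q ^ (2 * k) < 1 := fun k hk ↦ pow_lt_one₀ hq0.le hq1 (by omega)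
  have hc1 : ∀ k, 1 ≤ k → 1 ≤ c k := fun k hk ↦
    hc k hk ▸ one_le_inv_sqrt_one_sub (by positivity) (hx1 k hk)
  set P : ℕ → ℝ := fun k ↦ ∏ j ∈ range k, c (j + 1)
  have hP1 : ∀ k, 1 ≤ P k := fun k ↦ one_le_prod fun j _ ↦ hc1 (j + 1) (by omega)
  obtain ⟨F, hF⟩ : ∃ F, ∀ k, P k ≤ F := by
    simpa [P, prod_congr rfl fun j _ ↦ hc (j + 1) (by omega)]
      using exists_prod_inv_sqrt_one_sub_pow_le hq0.le hq1
  have hd : PerturbedRecurrence (max a b) (min a b) (fun j ↦ q ^ (2 * j)) (fun k ↦ B k / P k) := by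
    have hc0 : ∀ k, 1 ≤ k → c k ≠ 0 := fun k hk ↦ (zero_lt_one.trans_le (hc1 k hk)).ne'
    refine ⟨by simp [P, hB0], by simp [P, hB1, hc0, max_add_min], fun k ↦ ?_⟩
    rw [div_prod_range_add_two_eq hc0 hBrec k, max_add_min, max_mul_min, hc (k + 1) (by omega),
      inv_pow, inv_inv, sq_sqrt (by linarith [hx1 (k + 1) (by omega)])]
  have hm : 0 ≤ max a b := le_max_of_le_left ha.le
  have hn : 0 ≤ min a b := le_min ha.le hb.le
  have hx : ∀ j, 0 ≤ q ^ (2 * j) := fun j ↦ by positivity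
  have hxsum : Summable fun j : ℕ ↦ j * q ^ (2 * j) := by
    have hq2 : ‖q ^ 2‖ < 1 := by
      rw [norm_of_nonneg (by positivity)]
      exact pow_lt_one₀ hq0.le hq1 two_ne_zero
    simpa [pow_mul] using summable_pow_mul_geometric_of_norm_lt_one 1 hq2
  have hlow := fun k ↦ (hd.pow_le_and_mul_le_succ hm hn hx k).1
  have hd0 : ∀ k, 0 ≤ B k / P k := fun k ↦ (pow_nonneg hm k).trans (hlow k)
  obtain ⟨C, hC⟩ := hd.exists_le_mul_pow hn min_le_max hx hxsum
  have hBd : ∀ k, B k = P k * (B k / P k) := fun k ↦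
    (mul_div_cancel₀ _ (zero_lt_one.trans_le (hP1 k)).ne').symm
  refine summable_sq_inv_pow_mul_iff (C := F * C) hm hq0 (fun k ↦ ?_) (fun k ↦ ?_)
  · rw [hBd k]
    exact (hlow k).trans (le_mul_of_one_le_left (hd0 k) (hP1 k))
  · rw [hBd k, mul_assoc F, mul_assoc F]
    exact mul_le_mul (hF k) (hC k) (hd0 k) (zero_le_one.trans ((hP1 0).trans (hF 0)))
end

section
/- Assume b_k > 0 for all k ≥ 0, and define g_0 = 0 and g_k = μ b_{k−1} / (κ c_k b_k) for k ≥ 1. Then for every k ≥ 1 one has g_k (1 − g_{k−1}) = μ / (κ² c_k²); moreover the sequence (g_k)_{k≥0} is nondecreasing and satisfies g_k ≤ 1/2 for all k. -/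
/-!
Writing `r_k = μ / (κ² c_k²) = μ (1 - q^{2k}) / κ²`, the recurrence for `B` turns into the
Riccati-type relation `g_k (1 - g_{k-1}) = r_k`. Since `r_k ≤ 1/4` (AM–GM and `c_k ≥ 1`),
`g_{k-1} ≤ 1/2` forces `g_k = r_k / (1 - g_{k-1}) ≤ 1/2`. Since `r` is nondecreasing and
`r_k / (1 - g_{k-1})` is increasing in both `r_k` and `g_{k-1}`, monotonicity of `g` propagates
by induction.
-/

theorem mul_one_sub_ratio_eq {κ μ : ℝ} (hκ : κ ≠ 0) {c B g : ℕ → ℝ}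
    (hc : ∀ k, 1 ≤ k → c k ≠ 0) (hB : ∀ k, B k ≠ 0)
    (hB0 : B 0 = 1) (hB1 : B 1 = κ * c 1)
    (hBrec : ∀ k, 1 ≤ k → B (k + 1) = κ * c (k + 1) * B k - μ * (c (k + 1) / c k) * B (k - 1))
    (hg0 : g 0 = 0) (hg : ∀ k, 1 ≤ k → g k = μ * B (k - 1) / (κ * c k * B k)) :
    ∀ k, 1 ≤ k → g k * (1 - g (k - 1)) = μ / (κ ^ 2 * c k ^ 2) := by
  rintro (_ | _ | m) hk
  · omega
  · have hc₁ := hc 1 le_rfl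
    rw [hg 1 le_rfl, Nat.sub_self, hg0, hB0, hB1]
    field_simp
    ring
  · have h₁ := hc (m + 1) (by omega)
    have h₂ := hc (m + 1 + 1) (by omega)
    have hB₀ := hB m
    have hB₁ := hB (m + 1)
    have hB₂ := hB (m + 1 + 1)
    have hrec := hBrec (m + 1) (by omega)
    rw [Nat.add_sub_cancel] at hrec
    rw [hg (m + 1 + 1) (by omega), Nat.add_sub_cancel, hg (m + 1) (by omega), Nat.add_sub_cancel]
    field_simp at hrec ⊢
    linear_combination -μ * hrec

theorem mul_mul_div_add_sq_le_quarter {a b t : ℝ} (hab : 0 ≤ a * b) (ht : t ≤ 1) :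
    a * b * t / (a + b) ^ 2 ≤ 1 / 4 := by
  rcases (sq_nonneg (a + b)).eq_or_lt with h | h
  · simp [← h]
  · rw [div_le_iff₀ h]
    nlinarith [sq_nonneg (a - b), mul_le_mul_of_nonneg_left ht hab]

theorem div_mul_inv_sqrt_one_sub_sq {μ κ x : ℝ} (hx : x < 1) :
    μ / (κ ^ 2 * ((√(1 - x))⁻¹) ^ 2) = μ * (1 - x) / κ ^ 2 := by
  have hx' : 1 - x ≠ 0 := by linarith
  rw [inv_pow, Real.sq_sqrt (by linarith)]
  field_simp

theorem nonneg_and_le_half_of_mul_one_sub_eq {g r : ℕ → ℝ} (hg0 : g 0 = 0)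
    (hrec : ∀ k, g (k + 1) * (1 - g k) = r k) (hr_nonneg : ∀ k, 0 ≤ r k)
    (hr_le : ∀ k, r k ≤ 1 / 4) : ∀ k, 0 ≤ g k ∧ g k ≤ 1 / 2 := by
  intro k
  induction k with
  | zero => simp [hg0]
  | succ k ih =>
    constructor <;> nlinarith [hrec k, hr_nonneg k, hr_le k, ih.2]

theorem monotone_of_mul_one_sub_eq {g r : ℕ → ℝ} (hg0 : g 0 = 0)
    (hrec : ∀ k, g (k + 1) * (1 - g k) = r k) (hg_nonneg : ∀ k, 0 ≤ g k) (hg_lt : ∀ k, g k < 1)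
    (hr : Monotone r) : Monotone g := by
  refine monotone_nat_of_le_succ fun k => ?_
  induction k with
  | zero => simpa [hg0] using hg_nonneg 1
  | succ k ih =>
    have key : g (k + 1) * (1 - g (k + 1)) ≤ g (k + 2) * (1 - g (k + 1)) :=
      calc g (k + 1) * (1 - g (k + 1)) ≤ g (k + 1) * (1 - g k) := by
            gcongr
            exact hg_nonneg _
        _ = r k := hrec k
        _ ≤ r (k + 1) := hr k.le_succ
        _ = g (k + 2) * (1 - g (k + 1)) := (hrec (k + 1)).symm
    exact le_of_mul_le_mul_right key (sub_pos.2 (hg_lt _))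

/-- With the sequence `(B k)` as in the appendix lemma, assume `B k > 0` for all `k`,
and define `g 0 = 0`, `g k = μ B (k−1) / (κ c k B k)` for `k ≥ 1`.  Then
`g k (1 − g (k−1)) = μ / (κ² c k²)` for all `k ≥ 1`, the sequence `g` is nondecreasing,
and `g k ≤ 1/2` for all `k`. -/
theorem auxiliary_sequence_properties
    (q a b : ℝ) (hq0 : 0 < q) (hq1 : q < 1) (ha : 0 < a) (hb : 0 < b)
    (c : ℕ → ℝ) (hc : ∀ k : ℕ, 1 ≤ k → c k = (Real.sqrt (1 - q ^ (2 * k)))⁻¹)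
    (B : ℕ → ℝ) (hB0 : B 0 = 1) (hB1 : B 1 = (a + b) * c 1)
    (hBrec : ∀ k : ℕ, 1 ≤ k →
      B (k + 1) = (a + b) * c (k + 1) * B k - (a * b) * (c (k + 1) / c k) * B (k - 1))
    (hBpos : ∀ k : ℕ, 0 < B k)
    (g : ℕ → ℝ) (hg0 : g 0 = 0)
    (hg : ∀ k : ℕ, 1 ≤ k → g k = (a * b) * B (k - 1) / ((a + b) * c k * B k)) :
    (∀ k : ℕ, 1 ≤ k → g k * (1 - g (k - 1)) = (a * b) / ((a + b) ^ 2 * (c k) ^ 2)) ∧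
    Monotone g ∧ (∀ k : ℕ, g k ≤ 1 / 2) := by
  have hκ : a + b ≠ 0 := by positivity
  have hab : 0 ≤ a * b := by positivity
  have hq_pow_lt (k : ℕ) (hk : 1 ≤ k) : q ^ (2 * k) < 1 := pow_lt_one₀ hq0.le hq1 (by omega)
  have hc_ne (k : ℕ) (hk : 1 ≤ k) : c k ≠ 0 := by
    rw [hc k hk]
    exact inv_ne_zero (Real.sqrt_pos.2 (sub_pos.2 (hq_pow_lt k hk))).ne'
  have hid := mul_one_sub_ratio_eq hκ hc_ne (fun k => (hBpos k).ne') hB0 hB1 hBrec hg0 hg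
  set r : ℕ → ℝ := fun k => a * b * (1 - q ^ (2 * (k + 1))) / (a + b) ^ 2
  have hrec (k : ℕ) : g (k + 1) * (1 - g k) = r k := by
    have h := hid (k + 1) (by omega)
    rwa [Nat.add_sub_cancel, hc (k + 1) (by omega),
      div_mul_inv_sqrt_one_sub_sq (hq_pow_lt (k + 1) (by omega))] at h
  have hr_mono : Monotone r := by
    refine monotone_nat_of_le_succ fun k => ?_
    have := pow_le_pow_of_le_one hq0.le hq1.le (show 2 * (k + 1) ≤ 2 * (k + 1 + 1) by omega)
    simp only [r]
    gcongr
  have hbound := nonneg_and_le_half_of_mul_one_sub_eq hg0 hrec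
    (fun k => div_nonneg (mul_nonneg hab (sub_nonneg.2 (hq_pow_lt _ (by omega)).le)) (sq_nonneg _))
    (fun k => mul_mul_div_add_sq_le_quarter hab (by simp [pow_nonneg hq0.le]))
  refine ⟨hid, monotone_of_mul_one_sub_eq hg0 hrec (fun k => (hbound k).1)
    (fun k => (hbound k).2.trans_lt (by norm_num)) hr_mono, fun k => (hbound k).2⟩
end

section
/- Let n ≥ 4 and let q_1, …, q_n be pairwise distinct positive real numbers. Then there exist 3-element subsets T_1, …, T_{n−2} of {1, …, n} such that: (a) for each i ∈ {1, …, n−2}, the three numbers q_j (j ∈ T_i) do not form a geometric progression in any order; (b) there exist pairwise distinct indices j_3, …, j_{n−2} ∈ {1, …, n} such that for each k = 3, …, n−2 one has j_k ∈ T_k and j_k ∉ T_i for all i < k; (c) there exist indices x ∈ T_1 \ T_2 and y ∈ T_2 \ T_1. -/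
/-! Let `a` and `b` be the indices of the largest and the smallest value. For any other index `x`,
the triple `{b, x, a}` can only be a geometric progression with `q x` in the middle, that is, if
`q x ^ 2 = q a * q b`, and this happens for at most one `x`. Enumerate the remaining `n - 2`
indices as `s 1, …, s (n - 2)` with this exceptional index (if any) last, and take
`T i = {b, s i, a}`, except that the last triple is replaced by a non-geometric triple containing
`s (n - 2)`. Then `j k = s k` is new in `T k`. -/

open Finset

section GeomProgression

variable {α : Type*} {q : α → ℝ}

theorem exists_extremes_ne [Finite α] [Nontrivial α] (hinj : Function.Injective q) :
    ∃ a b : α, a ≠ b ∧ (∀ x, q b ≤ q x) ∧ ∀ x, q x ≤ q a := by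
  obtain ⟨a, ha⟩ := Finite.exists_max q
  obtain ⟨b, hb⟩ := Finite.exists_min q
  refine ⟨a, b, fun hab => ?_, hb, ha⟩
  obtain ⟨x, y, hxy⟩ := exists_pair_ne α
  exact hxy (hinj ((le_antisymm (ha x) (hab ▸ hb x)).trans (le_antisymm (ha y) (hab ▸ hb y)).symm))

def IsNonGeomTriple (q : α → ℝ) (T : Finset α) : Prop :=
  #T = 3 ∧ ∀ x ∈ T, ∀ y ∈ T, ∀ z ∈ T, x ≠ y → x ≠ z → y ≠ z → q x ^ 2 ≠ q y * q z

variable [DecidableEq α]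

theorem isNonGeomTriple_of_lt {lo mid hi : α} (hpos : 0 < q lo) (hlo : q lo < q mid)
    (hhi : q mid < q hi) (hmid : q mid ^ 2 ≠ q hi * q lo) :
    IsNonGeomTriple q {lo, mid, hi} := by
  have hmid' : q mid ^ 2 ≠ q lo * q hi := mul_comm (q hi) (q lo) ▸ hmid
  refine ⟨card_eq_three.2 ⟨lo, mid, hi, ?_, ?_, ?_, rfl⟩, ?_⟩
  · exact fun h => hlo.ne (congrArg q h)
  · exact fun h => (hlo.trans hhi).ne (congrArg q h)
  · exact fun h => hhi.ne (congrArg q h)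
  intro x hx y hy z hz hxy hxz hyz
  simp only [mem_insert, mem_singleton] at hx hy hz
  -- Among positive reals, `q lo ^ 2` is below and `q hi ^ 2` above the product of the other two.
  rcases hx with rfl | rfl | rfl <;> rcases hy with rfl | rfl | rfl <;>
    rcases hz with rfl | rfl | rfl <;>
    first
      | exact absurd rfl ‹_›
      | assumption
      | (intro h; nlinarith)

variable {a b : α}

theorem isNonGeomTriple_extremes {x : α} (hpos : 0 < q b) (hinj : Function.Injective q)
    (hmin : ∀ x, q b ≤ q x) (hmax : ∀ x, q x ≤ q a) (hx : x ∉ ({a, b} : Finset α))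
    (hmean : q x ^ 2 ≠ q a * q b) : IsNonGeomTriple q {b, x, a} := by
  simp only [mem_insert, mem_singleton, not_or] at hx
  exact isNonGeomTriple_of_lt hpos ((hmin x).lt_of_ne (hinj.ne (Ne.symm hx.2)))
    ((hmax x).lt_of_ne (hinj.ne hx.1)) hmean

variable [Fintype α]

theorem exists_closing_triple (hpos : ∀ x, 0 < q x) (hinj : Function.Injective q)
    (hmin : ∀ x, q b ≤ q x) (hmax : ∀ x, q x ≤ q a) (hR : 1 < #({a, b}ᶜ : Finset α)) :
    ∃ c ∉ ({a, b} : Finset α), (∀ x ∉ ({a, b} : Finset α), x ≠ c → q x ^ 2 ≠ q a * q b) ∧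
      ∃ U, c ∈ U ∧ IsNonGeomTriple q U := by
  by_cases hmean : ∃ c ∉ ({a, b} : Finset α), q c ^ 2 = q a * q b
  · obtain ⟨c, hc, hcab⟩ := hmean
    obtain ⟨t, ht, htc⟩ := exists_mem_ne hR c
    rw [mem_compl] at ht
    refine ⟨c, hc, fun x _ hxc h => hxc (hinj ?_), ?_⟩
    · exact (pow_left_inj₀ (hpos x).le (hpos c).le two_ne_zero).1 (h.trans hcab.symm)
    simp only [mem_insert, mem_singleton, not_or] at hc ht
    -- `q c` is the geometric mean of the extremes, so `c` in the middle of `t` and one extreme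
    -- gives a progression only if `t` is the other extreme.
    rcases (hinj.ne htc).lt_or_gt with htc | hct
    · refine ⟨{t, c, a}, by simp,
        isNonGeomTriple_of_lt (hpos t) htc ((hmax c).lt_of_ne (hinj.ne hc.1)) ?_⟩
      rw [hcab]
      exact fun h => ht.2 (hinj (mul_left_cancel₀ (hpos a).ne' h).symm)
    · refine ⟨{b, c, t}, by simp,
        isNonGeomTriple_of_lt (hpos b) ((hmin c).lt_of_ne (hinj.ne (Ne.symm hc.2))) hct ?_⟩
      rw [hcab]
      exact fun h => ht.1 (hinj (mul_right_cancel₀ (hpos b).ne' h).symm)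
  · push Not at hmean
    obtain ⟨c, hc⟩ := card_pos.1 (zero_lt_one.trans hR)
    rw [mem_compl] at hc
    exact ⟨c, hc, fun x hx _ => hmean x hx, {b, c, a}, by simp,
      isNonGeomTriple_extremes (hpos b) hinj hmin hmax hc (hmean c hc)⟩

end GeomProgression

theorem Finset.exists_injOn_Icc_of_mem {α : Type*} [DecidableEq α] {S : Finset α} {c : α}
    (hc : c ∈ S) :
    ∃ s : ℕ → α, Set.InjOn s (Set.Icc 1 #S) ∧ Set.MapsTo s (Set.Icc 1 #S) S ∧ s #S = c := by
  set L := (S.erase c).toList ++ [c]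
  have hlen : L.length = #S := by simp [L, card_erase_add_one hc]
  have hnodup : L.Nodup := by simp +contextual [L, List.nodup_append, nodup_toList]
  have hLS : ∀ x ∈ L, x ∈ S := by simp +contextual [L, or_imp, hc]
  refine ⟨fun i => L.getD (i - 1) c, fun i hi k hk h => ?_, fun i hi => ?_, ?_⟩
  · simp only [Set.mem_Icc] at hi hk
    simp only [List.getD_eq_getElem _ _ (show i - 1 < L.length by omega),
      List.getD_eq_getElem _ _ (show k - 1 < L.length by omega)] at h
    have := (hnodup.getElem_inj_iff).1 h
    omega
  · simp only [Set.mem_Icc] at hi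
    simp only [List.getD_eq_getElem _ _ (show i - 1 < L.length by omega)]
    exact hLS _ (List.getElem_mem _)
  · simp [L, ← card_erase_add_one hc]

section TripleFamily

variable {α : Type*} [DecidableEq α] (a b : α) (s : ℕ → α) (m : ℕ) (U : Finset α)

def tripleFamily (i : ℕ) : Finset α :=
  if i = m then U else {b, s i, a}

variable {a b s m U}

theorem mem_tripleFamily_self (hU : s m ∈ U) (i : ℕ) : s i ∈ tripleFamily a b s m U i := by
  unfold tripleFamily
  split_ifs with hi
  · exact hi ▸ hU
  · simp

theorem notMem_tripleFamily_of_lt (hs : Set.InjOn s (Set.Icc 1 m))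
    (hsab : ∀ k ∈ Set.Icc 1 m, s k ∉ ({a, b} : Finset α)) {i k : ℕ} (hi : 1 ≤ i) (hik : i < k)
    (hk : k ≤ m) : s k ∉ tripleFamily a b s m U i := by
  have hki : s k ≠ s i := hs.ne ⟨by omega, hk⟩ ⟨hi, by omega⟩ (by omega)
  have := hsab k ⟨by omega, hk⟩
  simp only [mem_insert, mem_singleton, not_or] at this
  simp [tripleFamily, hik.trans_le hk |>.ne, this, hki]

theorem exists_mem_tripleFamily_one_notMem_two (hm : 2 ≤ m) (hs : Set.InjOn s (Set.Icc 1 m))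
    (hsab : ∀ k ∈ Set.Icc 1 m, s k ∉ ({a, b} : Finset α)) (hab : a ≠ b) (hU : #U = 3)
    (hsU : s m ∈ U) : ∃ x ∈ tripleFamily a b s m U 1, x ∉ tripleFamily a b s m U 2 := by
  have h1 : #(tripleFamily a b s m U 1) = 3 := by
    have := hsab 1 ⟨le_rfl, by omega⟩
    simp only [mem_insert, mem_singleton, not_or] at this
    rw [tripleFamily, if_neg (by omega)]
    exact card_eq_three.2 ⟨b, s 1, a, Ne.symm this.2, hab.symm, this.1, rfl⟩
  have h2 : #(tripleFamily a b s m U 2) ≤ 3 := by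
    unfold tripleFamily
    split_ifs
    · exact hU.le
    · exact card_le_three
  by_contra! hsub
  have heq := eq_of_subset_of_card_le hsub (h2.trans h1.ge)
  exact notMem_tripleFamily_of_lt hs hsab le_rfl one_lt_two hm (heq ▸ mem_tripleFamily_self hsU 2)

end TripleFamily

/-- Three positive reals `x, y, z` form a geometric progression in some order if
`x² = yz`, or `y² = xz`, or `z² = xy`.  A 3-element subset `T` avoids geometric
progressions iff `q x ^ 2 ≠ q y * q z` for all pairwise distinct `x, y, z ∈ T`. -/
theorem choice_of_non_geometric_triples
    (n : ℕ) (hn : 4 ≤ n) (q : Fin n → ℝ)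
    (hpos : ∀ i, 0 < q i) (hinj : Function.Injective q) :
    ∃ T : ℕ → Finset (Fin n),
      -- (a) each of T 1, …, T (n-2) is a 3-element set whose q-values do not form
      -- a geometric progression in any order
      (∀ i : ℕ, 1 ≤ i → i ≤ n - 2 → (T i).card = 3 ∧
        ∀ x ∈ T i, ∀ y ∈ T i, ∀ z ∈ T i,
          x ≠ y → x ≠ z → y ≠ z → q x ^ 2 ≠ q y * q z) ∧
      -- (b) pairwise distinct indices j 3, …, j (n-2) with j k ∈ T k and j k ∉ T i for i < k
      (∃ j : ℕ → Fin n,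
        (∀ k l : ℕ, 3 ≤ k → k ≤ n - 2 → 3 ≤ l → l ≤ n - 2 → k ≠ l → j k ≠ j l) ∧
        (∀ k : ℕ, 3 ≤ k → k ≤ n - 2 →
          j k ∈ T k ∧ ∀ i : ℕ, 1 ≤ i → i < k → j k ∉ T i)) ∧
      -- (c) elements x ∈ T 1 \ T 2 and y ∈ T 2 \ T 1
      (∃ x, x ∈ T 1 ∧ x ∉ T 2) ∧ (∃ y, y ∈ T 2 ∧ y ∉ T 1) := by
  have : Nontrivial (Fin n) := Fin.nontrivial_iff_two_le.2 (by omega)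
  obtain ⟨a, b, hab, hmin, hmax⟩ := exists_extremes_ne hinj
  have hcard : #({a, b}ᶜ : Finset (Fin n)) = n - 2 := by
    rw [card_compl, card_pair hab, Fintype.card_fin]
  obtain ⟨c, hc, hmean, U, hcU, hU⟩ := exists_closing_triple hpos hinj hmin hmax (by omega)
  obtain ⟨s, hs, hsab, hsc⟩ := exists_injOn_Icc_of_mem (mem_compl.2 hc)
  rw [hcard] at hs hsab hsc
  replace hsab : ∀ k ∈ Set.Icc 1 (n - 2), s k ∉ ({a, b} : Finset (Fin n)) :=
    fun k hk => mem_compl.1 (hsab hk)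
  subst hsc
  refine ⟨tripleFamily a b s (n - 2) U, fun i hi hin => ?_,
    ⟨s, fun k l hk hkn hl hln hkl => hs.ne ⟨by omega, hkn⟩ ⟨by omega, hln⟩ hkl,
      fun k _ hk => ⟨mem_tripleFamily_self hcU k,
        fun i hi hik => notMem_tripleFamily_of_lt hs hsab hi hik hk⟩⟩,
    exists_mem_tripleFamily_one_notMem_two (by omega) hs hsab hab hU.1 hcU,
    s 2, mem_tripleFamily_self hcU 2,
    notMem_tripleFamily_of_lt hs hsab le_rfl one_lt_two (by omega)⟩
  unfold tripleFamily
  split_ifs with hi'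
  · exact hU
  · exact isNonGeomTriple_extremes (hpos b) hinj hmin hmax (hsab i ⟨hi, hin⟩)
      (hmean _ (hsab i ⟨hi, hin⟩) (hs.ne ⟨hi, hin⟩ ⟨by omega, le_rfl⟩ hi'))
end

section
/- Let q_1, q_2, q_3, q_4 be pairwise distinct positive real numbers and let r be a positive real number with r > q_i for i = 1, 2, 3, 4. Then there exist distinct indices k_1, k_2 ∈ {1, 2, 3, 4} such that the three numbers q_{k_1}, q_{k_2}, r do not form a geometric progression in any order. -/
lemma aux_gp (a b c r : ℝ) (hc : 0 < c) (hcb : c < b) (hba : b < a) (har : a < r) :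
    (a ^ 2 ≠ b * r ∧ b ^ 2 ≠ a * r ∧ r ^ 2 ≠ a * b) ∨
    (a ^ 2 ≠ c * r ∧ c ^ 2 ≠ a * r ∧ r ^ 2 ≠ a * c) := by
  by_cases h : a ^ 2 = b * r
  · right
    refine ⟨fun he => ?_, fun he => ?_, fun he => ?_⟩ <;> nlinarith
  · left
    exact ⟨h, fun he => by nlinarith, fun he => by nlinarith⟩

lemma main_aux (q : Fin 4 → ℝ) (r : ℝ) (i j k : Fin 4)
    (hc : 0 < q k) (h1 : q k < q j) (h2 : q j < q i) (h3 : q i < r)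
    (hij : i ≠ j) (hik : i ≠ k) :
    ∃ k₁ k₂ : Fin 4, k₁ ≠ k₂ ∧
      q k₁ ^ 2 ≠ q k₂ * r ∧ q k₂ ^ 2 ≠ q k₁ * r ∧ r ^ 2 ≠ q k₁ * q k₂ := by
  rcases aux_gp (q i) (q j) (q k) r hc h1 h2 h3 with h | h
  · exact ⟨i, j, hij, h⟩
  · exact ⟨i, k, hik, h⟩

/-- Given four pairwise distinct positive reals `q i` and a positive real `r`
strictly larger than all of them, there are distinct indices `k₁ ≠ k₂` such that
`q k₁, q k₂, r` do not form a geometric progression in any order. -/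
theorem non_geometric_pair_with_larger_element
    (q : Fin 4 → ℝ) (hpos : ∀ i, 0 < q i) (hinj : Function.Injective q)
    (r : ℝ) (hr : 0 < r) (hri : ∀ i, q i < r) :
    ∃ k₁ k₂ : Fin 4, k₁ ≠ k₂ ∧
      q k₁ ^ 2 ≠ q k₂ * r ∧ q k₂ ^ 2 ≠ q k₁ * r ∧ r ^ 2 ≠ q k₁ * q k₂ := by
  have h01 : q 0 ≠ q 1 := fun h => by simpa using hinj h
  have h02 : q 0 ≠ q 2 := fun h => by simpa using hinj h
  have h12 : q 1 ≠ q 2 := fun h => by simpa using hinj h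
  rcases h01.lt_or_gt with a | a <;> rcases h02.lt_or_gt with b | b <;>
    rcases h12.lt_or_gt with c | c
  · exact main_aux q r 2 1 0 (hpos 0) a c (hri 2) (by decide) (by decide)
  · exact main_aux q r 1 2 0 (hpos 0) b c (hri 1) (by decide) (by decide)
  · exact absurd (a.trans c) (lt_asymm b)
  · exact main_aux q r 1 0 2 (hpos 2) b a (hri 1) (by decide) (by decide)
  · exact main_aux q r 2 0 1 (hpos 1) a b (hri 2) (by decide) (by decide)
  · exact absurd (b.trans c) (lt_asymm a)
  · exact main_aux q r 0 2 1 (hpos 1) c b (hri 0) (by decide) (by decide)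
  · exact main_aux q r 0 1 2 (hpos 2) c a (hri 0) (by decide) (by decide)
end

section
/- Let q ∈ (0,1) and let H = ℓ²(ℕ₀) with standard orthonormal basis (e_k)_{k≥0}. There exist bounded linear operators α, γ on H such that α e_0 = 0, α e_k = √(1 − q^{2k}) e_{k−1} for k ≥ 1, γ e_l = q^l e_l for l ≥ 0, γ is self-adjoint, and the SU_q(2) relations hold: αγ = qγα, αγ* = qγ*α, γ*γ = γγ*, α*α + γ*γ = 1, αα* + q²γ*γ = 1. -/
/-
Both operators are weighted compositions `x ↦ (j ↦ c j * x (s j))` with `s` injective and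
`|c| ≤ 1`, hence contractions: `α` is the backward shift (`s = succ`) with weights
`√(1 - q^{2(j+1)})` and `γ` the diagonal (`s = id`) with weights `q^j`. The adjoint of a
weighted composition is read off on basis vectors, `⟪e_i, T* y⟫ = ⟪T e_i, y⟫`, so `α*` is the
forward shift with the same real weights and `γ` is self-adjoint. Every relation then holds
coordinatewise, the two quadratic ones because `(1 - q^{2k}) + q^{2k} = 1`.
-/

open scoped ENNReal NNReal ComplexConjugate lp
open Function

namespace lp

variable {ι κ 𝕜 : Type*} [RCLike 𝕜] {p : ℝ≥0∞} {c : κ → 𝕜} {K : ℝ≥0} {s : κ → ι}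

theorem norm_rpow_mul_comp_le (hc : ∀ j, ‖c j‖ ≤ K) (x : ℓ^p(ι, 𝕜)) (j : κ) :
    ‖c j * x (s j)‖ ^ p.toReal ≤ (K : ℝ) ^ p.toReal * ‖x (s j)‖ ^ p.toReal := by
  rw [norm_mul, Real.mul_rpow (norm_nonneg _) (norm_nonneg _)]
  gcongr
  exact hc j

theorem summable_norm_rpow_mul_comp (hp : 0 < p.toReal) (hc : ∀ j, ‖c j‖ ≤ K) (hs : Injective s)
    (x : ℓ^p(ι, 𝕜)) : Summable fun j ↦ ‖c j * x (s j)‖ ^ p.toReal :=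
  ((((lp.memℓp x).summable hp).comp_injective hs).mul_left _).of_nonneg_of_le
    (fun _ ↦ by positivity) (norm_rpow_mul_comp_le hc x)

theorem tsum_norm_rpow_mul_comp_le (hp : 0 < p.toReal) (hc : ∀ j, ‖c j‖ ≤ K) (hs : Injective s)
    (x : ℓ^p(ι, 𝕜)) : ∑' j, ‖c j * x (s j)‖ ^ p.toReal ≤ ((K : ℝ) * ‖x‖) ^ p.toReal := by
  have hx := (lp.memℓp x).summable hp
  calc ∑' j, ‖c j * x (s j)‖ ^ p.toReal
      ≤ ∑' j, (K : ℝ) ^ p.toReal * ‖x (s j)‖ ^ p.toReal :=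
        (summable_norm_rpow_mul_comp hp hc hs x).tsum_le_tsum (norm_rpow_mul_comp_le hc x)
          ((hx.comp_injective hs).mul_left _)
    _ = (K : ℝ) ^ p.toReal * ∑' j, ‖x (s j)‖ ^ p.toReal := tsum_mul_left
    _ ≤ (K : ℝ) ^ p.toReal * ∑' i, ‖x i‖ ^ p.toReal := by
        gcongr
        exact tsum_comp_le_tsum_of_inj hx (fun _ ↦ by positivity) hs
    _ = ((K : ℝ) * ‖x‖) ^ p.toReal := by
        rw [← norm_rpow_eq_tsum hp]
        exact (Real.mul_rpow K.2 (norm_nonneg' x)).symm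

variable [Fact (1 ≤ p)]

noncomputable def weightedComp (hp : p ≠ ∞) (c : κ → 𝕜) (hc : ∀ j, ‖c j‖ ≤ K)
    (s : κ → ι) (hs : Injective s) : ℓ^p(ι, 𝕜) →L[𝕜] ℓ^p(κ, 𝕜) :=
  have hp' : 0 < p.toReal := ENNReal.toReal_pos (zero_lt_one.trans_le Fact.out).ne' hp
  LinearMap.mkContinuous
    { toFun x := ⟨fun j ↦ c j * x (s j), memℓp_gen (summable_norm_rpow_mul_comp hp' hc hs x)⟩
      map_add' x y := by ext j; exact mul_add (c j) (x (s j)) (y (s j))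
      map_smul' a x := by ext j; exact mul_left_comm (c j) a (x (s j)) }
    K fun x ↦ norm_le_of_tsum_le hp' (by positivity) (tsum_norm_rpow_mul_comp_le hp' hc hs x)

variable {hp : p ≠ ∞} {hc : ∀ j, ‖c j‖ ≤ K} {hs : Injective s}

@[simp]
theorem weightedComp_apply (x : ℓ^p(ι, 𝕜)) (j : κ) :
    weightedComp hp c hc s hs x j = c j * x (s j) := rfl

variable [DecidableEq ι]

theorem weightedComp_single [DecidableEq κ] (j : κ) (a : 𝕜) :
    weightedComp hp c hc s hs (lp.single p (s j) a) = lp.single p j (c j * a) := by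
  ext k
  by_cases hk : k = j
  · subst hk; simp
  · simp [lp.single_apply, hk, hs.ne hk]

theorem weightedComp_single_of_notMem_range {i : ι} (hi : i ∉ Set.range s) (a : 𝕜) :
    weightedComp hp c hc s hs (lp.single p i a) = 0 := by
  ext k
  have : s k ≠ i := fun h ↦ hi ⟨k, h⟩
  simp [lp.single_apply, this]

theorem apply_eq_inner_single (x : ℓ²(ι, 𝕜)) (i : ι) :
    x i = inner 𝕜 (lp.single 2 i (1 : 𝕜)) x := by
  simp [lp.inner_single_left]

variable {h2 : (2 : ℝ≥0∞) ≠ ∞}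

theorem adjoint_weightedComp_apply_comp [DecidableEq κ] (y : ℓ²(κ, 𝕜)) (j : κ) :
    (weightedComp h2 c hc s hs).adjoint y (s j) = conj (c j) * y j := by
  rw [apply_eq_inner_single, ContinuousLinearMap.adjoint_inner_right, weightedComp_single,
    lp.inner_single_left]
  simp [mul_comm]

theorem adjoint_weightedComp_apply_of_notMem_range (y : ℓ²(κ, 𝕜)) {i : ι}
    (hi : i ∉ Set.range s) : (weightedComp h2 c hc s hs).adjoint y i = 0 := by
  rw [apply_eq_inner_single, ContinuousLinearMap.adjoint_inner_right,
    weightedComp_single_of_notMem_range hi, inner_zero_left]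

end lp

namespace SUq2

noncomputable def weight (q : ℝ) (k : ℕ) : ℝ := √(1 - q ^ (2 * k))

variable {q : ℝ}

theorem norm_weight_le_one (k : ℕ) : ‖(weight q k : ℂ)‖ ≤ 1 := by
  rw [Complex.norm_real, weight, Real.norm_of_nonneg (Real.sqrt_nonneg _)]
  exact Real.sqrt_le_one.mpr (sub_le_self _ ((even_two_mul k).pow_nonneg q))

theorem weight_mul_self (hq : |q| ≤ 1) (k : ℕ) :
    (weight q k : ℂ) * weight q k = 1 - (q : ℂ) ^ (2 * k) := by
  have : q ^ (2 * k) ≤ 1 := by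
    rw [← (even_two_mul k).pow_abs]
    exact pow_le_one₀ (abs_nonneg q) hq
  rw [← Complex.ofReal_mul, weight, Real.mul_self_sqrt (sub_nonneg.mpr this)]
  push_cast
  rfl

theorem norm_pow_le_one (hq : |q| ≤ 1) (n : ℕ) : ‖(q : ℂ) ^ n‖ ≤ 1 := by
  rw [norm_pow, Complex.norm_real, Real.norm_eq_abs]
  exact pow_le_one₀ (abs_nonneg q) hq

variable (q) in
noncomputable def alpha : ℓ²(ℕ, ℂ) →L[ℂ] ℓ²(ℕ, ℂ) :=
  lp.weightedComp ENNReal.ofNat_ne_top (fun n ↦ (weight q (n + 1) : ℂ)) (K := 1)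
    (fun _ ↦ norm_weight_le_one _) Nat.succ Nat.succ_injective

noncomputable def gamma (hq : |q| ≤ 1) : ℓ²(ℕ, ℂ) →L[ℂ] ℓ²(ℕ, ℂ) :=
  lp.weightedComp ENNReal.ofNat_ne_top (fun n ↦ (q : ℂ) ^ n) (K := 1) (norm_pow_le_one hq)
    id injective_id

@[simp]
theorem alpha_apply (x : ℓ²(ℕ, ℂ)) (n : ℕ) : alpha q x n = weight q (n + 1) * x (n + 1) := rfl

@[simp]
theorem star_alpha_apply_zero (x : ℓ²(ℕ, ℂ)) : star (alpha q) x 0 = 0 :=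
  lp.adjoint_weightedComp_apply_of_notMem_range x fun ⟨k, hk⟩ ↦ Nat.succ_ne_zero k hk

@[simp]
theorem star_alpha_apply_succ (x : ℓ²(ℕ, ℂ)) (n : ℕ) :
    star (alpha q) x (n + 1) = weight q (n + 1) * x n := by
  rw [ContinuousLinearMap.star_eq_adjoint]
  exact (lp.adjoint_weightedComp_apply_comp x n).trans (by simp)

theorem alpha_single_zero : alpha q (lp.single 2 0 1) = 0 :=
  lp.weightedComp_single_of_notMem_range (fun ⟨k, hk⟩ ↦ Nat.succ_ne_zero k hk) 1

theorem alpha_single_succ (k : ℕ) :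
    alpha q (lp.single 2 (k + 1) 1) = (weight q (k + 1) : ℂ) • lp.single 2 k 1 := by
  rw [← lp.single_smul, smul_eq_mul]
  exact lp.weightedComp_single (s := Nat.succ) k 1

variable (hq : |q| ≤ 1)

@[simp]
theorem gamma_apply (x : ℓ²(ℕ, ℂ)) (n : ℕ) : gamma hq x n = (q : ℂ) ^ n * x n := rfl

theorem gamma_single (l : ℕ) : gamma hq (lp.single 2 l 1) = (q : ℂ) ^ l • lp.single 2 l 1 := by
  rw [← lp.single_smul, smul_eq_mul]
  exact lp.weightedComp_single (s := id) l 1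

theorem isSelfAdjoint_gamma : IsSelfAdjoint (gamma hq) := by
  ext x n
  rw [ContinuousLinearMap.star_eq_adjoint]
  exact (lp.adjoint_weightedComp_apply_comp x n).trans (by simp)

theorem alpha_mul_gamma : alpha q * gamma hq = (q : ℂ) • (gamma hq * alpha q) := by
  ext x n
  simp only [mul_apply_eq_comp, smul_apply, lp.coeFn_smul,
    Pi.smul_apply, smul_eq_mul, alpha_apply, gamma_apply]
  ring

theorem star_alpha_mul_alpha_add_gamma_mul_gamma :
    star (alpha q) * alpha q + gamma hq * gamma hq = 1 := by
  ext x (_ | n)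
  · simp
  · simp only [add_apply, mul_apply_eq_comp, AddSubgroup.coe_add, PreLp.add_apply,
      star_alpha_apply_succ, alpha_apply, gamma_apply, one_apply_eq_self]
    linear_combination x (n + 1) * weight_mul_self hq (n + 1)

theorem alpha_mul_star_alpha_add_gamma_mul_gamma :
    alpha q * star (alpha q) + ((q : ℂ) ^ 2) • (gamma hq * gamma hq) = 1 := by
  ext x n
  simp only [add_apply, smul_apply, mul_apply_eq_comp, one_apply_eq_self, lp.coeFn_add,
    lp.coeFn_smul, Pi.add_apply, Pi.smul_apply, smul_eq_mul, alpha_apply, star_alpha_apply_succ,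
    gamma_apply]
  linear_combination x n * weight_mul_self hq (n + 1)

end SUq2

open SUq2

/-- On `ℓ²(ℕ₀)` there exist bounded operators `α, γ` with `α e₀ = 0`,
`α e_k = √(1 − q^{2k}) e_{k−1}` (`k ≥ 1`), `γ e_l = q^l e_l`, `γ` self-adjoint,
satisfying the `SU_q(2)` relations. -/
theorem exists_suq2_operators_on_l2 (q : ℝ) (hq0 : 0 < q) (hq1 : q < 1) :
    ∃ α γ : lp (fun _ : ℕ => ℂ) 2 →L[ℂ] lp (fun _ : ℕ => ℂ) 2,
      α (lp.single 2 0 (1 : ℂ)) = 0 ∧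
      (∀ k : ℕ, 1 ≤ k →
        α (lp.single 2 k (1 : ℂ)) =
          ((Real.sqrt (1 - q ^ (2 * k)) : ℝ) : ℂ) • lp.single 2 (k - 1) (1 : ℂ)) ∧
      (∀ l : ℕ, γ (lp.single 2 l (1 : ℂ)) = ((q : ℂ) ^ l) • lp.single 2 l (1 : ℂ)) ∧
      IsSelfAdjoint γ ∧
      α * γ = (q : ℂ) • (γ * α) ∧
      α * star γ = (q : ℂ) • (star γ * α) ∧
      star γ * γ = γ * star γ ∧
      star α * α + star γ * γ = 1 ∧
      α * star α + ((q : ℂ) ^ 2) • (star γ * γ) = 1 := by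
  have hq : |q| ≤ 1 := abs_le.mpr ⟨by linarith, hq1.le⟩
  have hγ := isSelfAdjoint_gamma hq
  refine ⟨alpha q, gamma hq, alpha_single_zero, fun k hk ↦ ?_, gamma_single hq, hγ,
    alpha_mul_gamma hq, ?_, ?_, ?_, ?_⟩
  · obtain ⟨k, rfl⟩ := Nat.exists_eq_add_of_le' hk
    exact alpha_single_succ k
  all_goals rw [hγ.star_eq]
  · exact alpha_mul_gamma hq
  · exact star_alpha_mul_alpha_add_gamma_mul_gamma hq
  · exact alpha_mul_star_alpha_add_gamma_mul_gamma hq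
end

section
/- Let H be a complex Hilbert space, m, n ∈ ℕ, and let X = (X_{ps}) ∈ M_m(B(H)) and Y = (Y_{rt}) ∈ M_n(B(H)) be matrices of bounded operators such that the block operator X̃ on the ℓ²-direct sum of m copies of H given by (X̃ξ)_p = Σ_{s=1}^m X_{ps} ξ_s is unitary, and likewise the block operator Ỹ on the ℓ²-direct sum of n copies of H given by (Ỹη)_r = Σ_{t=1}^n Y_{rt} η_t is unitary. Let λ be a positive real number with λ ≠ 1, and let Z = (Z_{pr}) be an m × n matrix with entries in H such that Σ_{l=1}^m X_{pl} Z_{lr} = λ Σ_{t=1}^n Y_{rt} Z_{pt} for all p = 1, …, m and r = 1, …, n. Then Z_{pr} = 0 for all p, r. -/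
/-!
Write `ξ_r ∈ H^m` for the columns and `η_p ∈ H^n` for the rows of `Z`. The intertwining relation
says `(X̃ ξ_r)_p = λ (Ỹ η_p)_r`. Since `X̃` and `Ỹ` are isometries, summing `‖·‖²` over all `p, r`
gives `‖Z‖₂² = λ² ‖Z‖₂²` for the Hilbert–Schmidt-type norm `‖Z‖₂² = Σ ‖Z_{pr}‖²`, and `λ² ≠ 1`
forces `Z = 0`.
-/

/-- The `ℓ²`-direct sum of finitely many copies of a complete space is complete. -/
instance piLp.completeSpace (p : ENNReal) {ι : Type*} [Fintype ι] (β : ι → Type*)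
    [∀ i, UniformSpace (β i)] [∀ i, CompleteSpace (β i)] : CompleteSpace (PiLp p β) :=
  inferInstance

open Finset

section

variable {ι ι' κ : Type*} [Fintype ι] [Fintype ι'] [Fintype κ]

theorem sum_sum_norm_sq_map_columns {E : Type*} [SeminormedAddCommGroup E]
    (T : PiLp 2 (fun _ : ι => E) → PiLp 2 (fun _ : ι' => E))
    (hT : ∀ x, ‖T x‖ = ‖x‖) (A : ι → κ → E) :
    ∑ i, ∑ k, ‖T (WithLp.toLp 2 fun j => A j k) i‖ ^ 2 = ∑ i, ∑ k, ‖A i k‖ ^ 2 := by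
  rw [sum_comm, sum_comm (f := fun i k => ‖A i k‖ ^ 2)]
  refine sum_congr rfl fun k _ => ?_
  rw [← PiLp.norm_sq_eq_of_L2, hT, PiLp.norm_sq_eq_of_L2]

theorem eq_zero_of_sum_sum_norm_sq_eq_zero {E : Type*} [NormedAddCommGroup E] {A : ι → κ → E}
    (h : ∑ i, ∑ k, ‖A i k‖ ^ 2 = 0) (i : ι) (k : κ) : A i k = 0 := by
  have hrow := (sum_eq_zero_iff_of_nonneg fun i _ => sum_nonneg fun k _ => sq_nonneg ‖A i k‖).mp h
    i (mem_univ i)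
  have hentry := (sum_eq_zero_iff_of_nonneg fun k _ => sq_nonneg _).mp hrow k (mem_univ k)
  simpa using hentry

end

/-- If the block operators `X̃` and `Ỹ` associated to matrices `X ∈ M_m(B(H))` and
`Y ∈ M_n(B(H))` are unitary, `λ > 0`, `λ ≠ 1`, and the `m × n` matrix `Z` of vectors of `H`
satisfies `Σ_l X_{pl} Z_{lr} = λ Σ_t Y_{rt} Z_{pt}` for all `p, r`, then `Z = 0`. -/
theorem vanishing_of_intertwiner_matrix_for_distinct_scaling
    {H : Type*} [NormedAddCommGroup H] [InnerProductSpace ℂ H] [CompleteSpace H]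
    (m n : ℕ)
    (X : Fin m → Fin m → (H →L[ℂ] H)) (Y : Fin n → Fin n → (H →L[ℂ] H))
    (hX : ∃ Xt : PiLp 2 (fun _ : Fin m => H) →L[ℂ] PiLp 2 (fun _ : Fin m => H),
      (∀ (ξ : PiLp 2 (fun _ : Fin m => H)) (p : Fin m), Xt ξ p = ∑ s, X p s (ξ s)) ∧
      Xt * star Xt = 1 ∧ star Xt * Xt = 1)
    (hY : ∃ Yt : PiLp 2 (fun _ : Fin n => H) →L[ℂ] PiLp 2 (fun _ : Fin n => H),
      (∀ (η : PiLp 2 (fun _ : Fin n => H)) (r : Fin n), Yt η r = ∑ t, Y r t (η t)) ∧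
      Yt * star Yt = 1 ∧ star Yt * Yt = 1)
    (lam : ℝ) (hlam_pos : 0 < lam) (hlam_ne : lam ≠ 1)
    (Z : Fin m → Fin n → H)
    (hZ : ∀ (p : Fin m) (r : Fin n),
      ∑ l, X p l (Z l r) = (lam : ℂ) • ∑ t, Y r t (Z p t)) :
    ∀ (p : Fin m) (r : Fin n), Z p r = 0 := by
  obtain ⟨Xt, hXt, -, hXiso⟩ := hX
  obtain ⟨Yt, hYt, -, hYiso⟩ := hY
  have hXS := sum_sum_norm_sq_map_columns Xt (Xt.norm_map_iff_adjoint_comp_self.mpr hXiso) Z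
  have hYS := sum_sum_norm_sq_map_columns Yt (Yt.norm_map_iff_adjoint_comp_self.mpr hYiso)
    fun t p => Z p t
  rw [sum_comm, sum_comm (f := fun t p => ‖Z p t‖ ^ 2)] at hYS
  have hscale : ∑ p, ∑ r, ‖Xt (WithLp.toLp 2 fun l => Z l r) p‖ ^ 2 =
      lam ^ 2 * ∑ p, ∑ r, ‖Yt (WithLp.toLp 2 fun t => Z p t) r‖ ^ 2 := by
    simp_rw [mul_sum, hXt, hYt, hZ, norm_smul, Complex.norm_real,
      Real.norm_of_nonneg hlam_pos.le, mul_pow]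
  rw [hXS, hYS] at hscale
  have hZ0 : ∑ p, ∑ r, ‖Z p r‖ ^ 2 = 0 := (mul_left_eq_self₀.mp hscale.symm).resolve_left
    fun h => hlam_ne ((pow_eq_one_iff_of_nonneg hlam_pos.le two_ne_zero).mp h)
  exact eq_zero_of_sum_sum_norm_sq_eq_zero hZ0
end

section
/- Let 0 < q < p < 1 with p² < q. Then there exist nonzero vectors v_{12}, v_{32} ∈ ℓ²(ℕ₀) such that [(1 + q³/p⁴) I − (1/p²) α − (q³/p²) α*] v_{12} = 0 and γ* v_{32} = ((1/p²) I − α*) v_{12}. -/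
/-!
Write `Q = q²` and let `e_Q(x) = ∑ xⁿ zⁿ / (Q;Q)ₙ` be the q-exponential series, which satisfies the
q-difference equation `e_Q(Qx) = (1 - x z) e_Q(x)`. A vector whose coordinates are
`√((Q;Q)ₖ) Dₖ` lies in the kernel of `(1 + y/x) I - x⁻¹ α - y α*` as soon as
`(1 - Q^(k+1)) D_{k+1} = (x + y) Dₖ - x y D_{k-1}`, and by the q-difference equation this recurrence
holds for the coefficients of `D = e_Q(x) e_Q(y)`; take `x = p²`, `y = q³/p²`.
For the second equation, `(1 - p² z) D = e_Q(q²p²) e_Q(q³/p²)` has `k`-th coefficient `qᵏ` times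
that of `e_Q(qp²) e_Q(q²/p²)`, so `γ*` can be inverted on it coordinatewise. All arguments of the
q-exponentials lie in `[0, 1)`, so their coefficients are summable, and `ℓ¹ ⊆ ℓ²`.
-/

open PowerSeries Finset Filter

noncomputable section

def qPoch (Q : ℝ) (n : ℕ) : ℝ := ∏ i ∈ range n, (1 - Q ^ (i + 1))

section qPoch

variable {Q : ℝ}

@[simp] lemma qPoch_zero : qPoch Q 0 = 1 := prod_range_zero _

lemma qPoch_succ (n : ℕ) : qPoch Q (n + 1) = qPoch Q n * (1 - Q ^ (n + 1)) :=
  prod_range_succ _ _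

variable (hQ0 : 0 ≤ Q) (hQ1 : Q < 1)
include hQ0 hQ1

lemma one_sub_pow_succ_pos (n : ℕ) : 0 < 1 - Q ^ (n + 1) :=
  sub_pos.2 (pow_lt_one₀ hQ0 hQ1 n.succ_ne_zero)

lemma qPoch_pos (n : ℕ) : 0 < qPoch Q n :=
  prod_pos fun i _ => one_sub_pow_succ_pos hQ0 hQ1 i

lemma qPoch_le_one (n : ℕ) : qPoch Q n ≤ 1 :=
  prod_le_one (fun i _ => (one_sub_pow_succ_pos hQ0 hQ1 i).le)
    fun _ _ => sub_le_self _ (pow_nonneg hQ0 _)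

end qPoch

def qExp (Q x : ℝ) : ℝ⟦X⟧ := mk fun n => x ^ n / qPoch Q n

section qExp

variable {Q : ℝ}

@[simp] lemma coeff_qExp (x : ℝ) (n : ℕ) : coeff n (qExp Q x) = x ^ n / qPoch Q n :=
  coeff_mk _ _

lemma rescale_qExp (c x : ℝ) : rescale c (qExp Q x) = qExp Q (c * x) := by
  ext n
  simp [coeff_rescale, mul_pow, mul_div_assoc]

lemma one_sub_C_mul_X_mul_qExp (hQ0 : 0 ≤ Q) (hQ1 : Q < 1) (x : ℝ) :
    (1 - C x * X) * qExp Q x = qExp Q (Q * x) := by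
  ext (_ | n)
  · simp only [sub_mul, one_mul, map_sub, mul_assoc, coeff_C_mul, coeff_zero_X_mul, coeff_qExp,
      pow_zero, qPoch_zero]
    norm_num
  · have hP := (qPoch_pos hQ0 hQ1 n).ne'
    have hq := (one_sub_pow_succ_pos hQ0 hQ1 n).ne'
    rw [sub_mul, one_mul, map_sub, mul_assoc, coeff_C_mul, coeff_succ_X_mul]
    simp only [coeff_qExp, qPoch_succ]
    field_simp
    ring

lemma rescale_qExp_mul_qExp (hQ0 : 0 ≤ Q) (hQ1 : Q < 1) (x y : ℝ) :
    rescale Q (qExp Q x * qExp Q y) = (1 - C x * X) * (1 - C y * X) * (qExp Q x * qExp Q y) := by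
  rw [map_mul, rescale_qExp, rescale_qExp, ← one_sub_C_mul_X_mul_qExp hQ0 hQ1,
    ← one_sub_C_mul_X_mul_qExp hQ0 hQ1]
  ring

lemma coeff_succ_qExp_mul_qExp (hQ0 : 0 ≤ Q) (hQ1 : Q < 1) (x y : ℝ) (k : ℕ) :
    (1 - Q ^ (k + 1)) * coeff (k + 1) (qExp Q x * qExp Q y) =
      (x + y) * coeff k (qExp Q x * qExp Q y) - x * y * coeff k (X * (qExp Q x * qExp Q y)) := by
  have h := congrArg (coeff (k + 1)) (rescale_qExp_mul_qExp hQ0 hQ1 x y)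
  have e : (1 - C x * X) * (1 - C y * X) * (qExp Q x * qExp Q y) = qExp Q x * qExp Q y
      - X * (C x * (qExp Q x * qExp Q y) + C y * (qExp Q x * qExp Q y))
      + X * (C (x * y) * (X * (qExp Q x * qExp Q y))) := by
    rw [map_mul]; ring
  rw [e, coeff_rescale] at h
  simp only [map_add, map_sub, coeff_succ_X_mul, coeff_C_mul] at h
  linarith

lemma summable_coeff_qExp (hQ0 : 0 ≤ Q) (hQ1 : Q < 1) {x : ℝ} (hx0 : 0 ≤ x) (hx1 : x < 1) :
    Summable fun n => coeff n (qExp Q x) := by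
  have hQn : Tendsto (fun n => Q ^ (n + 1)) atTop (nhds 0) :=
    (tendsto_pow_atTop_nhds_zero_of_lt_one hQ0 hQ1).comp (tendsto_add_atTop_nat 1)
  have hsmall : ∀ᶠ n in atTop, Q ^ (n + 1) ≤ (1 - x) / (1 + x) :=
    hQn.eventually (ge_mem_nhds (by apply div_pos <;> linarith))
  -- ratio test: consecutive coefficients have ratio `x / (1 - Q^(n+1)) → x`
  refine summable_of_ratio_norm_eventually_le (r := (1 + x) / 2) (by linarith) ?_
  filter_upwards [hsmall] with n hn
  have hP := qPoch_pos hQ0 hQ1 n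
  have hq := one_sub_pow_succ_pos hQ0 hQ1 n
  have hratio : x / (1 - Q ^ (n + 1)) ≤ (1 + x) / 2 := by
    rw [div_le_iff₀ hq]
    rw [le_div_iff₀ (by linarith)] at hn
    nlinarith
  rw [coeff_qExp, coeff_qExp, qPoch_succ, Real.norm_of_nonneg (by positivity),
    Real.norm_of_nonneg (by positivity)]
  calc x ^ (n + 1) / (qPoch Q n * (1 - Q ^ (n + 1)))
      = x / (1 - Q ^ (n + 1)) * (x ^ n / qPoch Q n) := by field_simp; ring
    _ ≤ (1 + x) / 2 * (x ^ n / qPoch Q n) := by gcongr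

lemma summable_coeff_qExp_mul_qExp (hQ0 : 0 ≤ Q) (hQ1 : Q < 1) {x y : ℝ} (hx0 : 0 ≤ x)
    (hx1 : x < 1) (hy0 : 0 ≤ y) (hy1 : y < 1) :
    Summable fun n => coeff n (qExp Q x * qExp Q y) := by
  simp_rw [coeff_mul]
  exact (summable_norm_sum_mul_antidiagonal_of_summable_norm
    (summable_coeff_qExp hQ0 hQ1 hx0 hx1).norm (summable_coeff_qExp hQ0 hQ1 hy0 hy1).norm).of_norm

lemma coeff_zero_qExp_mul_qExp (x y : ℝ) : coeff 0 (qExp Q x * qExp Q y) = 1 := by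
  simp [coeff_mul]

lemma coeff_qExp_mul_mul_qExp (hQ0 : 0 ≤ Q) (hQ1 : Q < 1) (x y : ℝ) (k : ℕ) :
    coeff k (qExp Q (Q * x) * qExp Q y) =
      coeff k (qExp Q x * qExp Q y) - x * coeff k (X * (qExp Q x * qExp Q y)) := by
  rw [← one_sub_C_mul_X_mul_qExp hQ0 hQ1, sub_mul, one_mul, sub_mul, mul_assoc, mul_assoc,
    map_sub, coeff_C_mul]

end qExp

/-- With this weighting, for `Q = q²`, `α*` acts on coordinates as multiplication of `F` by `X`,
and `α` as the q-difference operator `F ↦ (F - F(Qz)) / z`. -/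
def weightedCoeff (Q : ℝ) (F : ℝ⟦X⟧) (k : ℕ) : ℝ := √(qPoch Q k) * coeff k F

section weightedCoeff

variable {Q : ℝ}

lemma sqrt_one_sub_pow_mul_weightedCoeff_pred (hQ0 : 0 ≤ Q) (hQ1 : Q < 1) (F : ℝ⟦X⟧) (k : ℕ) :
    √(1 - Q ^ k) * weightedCoeff Q F (k - 1) = weightedCoeff Q (X * F) k := by
  rcases k with _ | k
  · simp [weightedCoeff]
  · rw [weightedCoeff, weightedCoeff, coeff_succ_X_mul, Nat.add_sub_cancel, qPoch_succ,
      Real.sqrt_mul (qPoch_pos hQ0 hQ1 k).le]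
    ring

lemma sqrt_one_sub_pow_succ_mul_weightedCoeff_succ (hQ0 : 0 ≤ Q) (hQ1 : Q < 1) (F : ℝ⟦X⟧)
    (k : ℕ) : √(1 - Q ^ (k + 1)) * weightedCoeff Q F (k + 1) =
      √(qPoch Q k) * ((1 - Q ^ (k + 1)) * coeff (k + 1) F) := by
  rw [weightedCoeff, qPoch_succ, Real.sqrt_mul (qPoch_pos hQ0 hQ1 k).le]
  linear_combination (√(qPoch Q k) * coeff (k + 1) F) *
    Real.mul_self_sqrt (one_sub_pow_succ_pos hQ0 hQ1 k).le

lemma memℓp_weightedCoeff (hQ0 : 0 ≤ Q) (hQ1 : Q < 1) {F : ℝ⟦X⟧}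
    (hF : Summable fun n => coeff n F) :
    Memℓp (fun k => (weightedCoeff Q F k : ℂ)) 2 := by
  have h1 : Memℓp (fun k => |coeff k F|) 1 := memℓp_gen (by simpa using hF.abs)
  refine (h1.of_exponent_ge (by norm_num)).mono fun k => ?_
  rw [Complex.norm_real, Real.norm_eq_abs, weightedCoeff, abs_mul,
    abs_of_nonneg (Real.sqrt_nonneg _)]
  exact mul_le_of_le_one_left (abs_nonneg _)
    (Real.sqrt_le_one.2 (qPoch_le_one hQ0 hQ1 k))

lemma weightedCoeff_qExp_mul_qExp_eigen (hQ0 : 0 ≤ Q) (hQ1 : Q < 1) {x : ℝ} (hx : x ≠ 0)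
    (y : ℝ) (k : ℕ) :
    (1 + y / x) * weightedCoeff Q (qExp Q x * qExp Q y) k
      - x⁻¹ * (√(1 - Q ^ (k + 1)) * weightedCoeff Q (qExp Q x * qExp Q y) (k + 1))
      - y * (√(1 - Q ^ k) * weightedCoeff Q (qExp Q x * qExp Q y) (k - 1)) = 0 := by
  rw [sqrt_one_sub_pow_succ_mul_weightedCoeff_succ hQ0 hQ1,
    sqrt_one_sub_pow_mul_weightedCoeff_pred hQ0 hQ1, coeff_succ_qExp_mul_qExp hQ0 hQ1]
  simp only [weightedCoeff]
  field_simp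
  ring

lemma pow_mul_weightedCoeff_qExp_mul_qExp {q : ℝ} (hq0 : 0 ≤ q) (hq1 : q < 1) {x : ℝ}
    (hx : x ≠ 0) (z : ℝ) (k : ℕ) :
    q ^ k * (x⁻¹ * weightedCoeff (q ^ 2) (qExp (q ^ 2) (q * x) * qExp (q ^ 2) z) k) =
      x⁻¹ * weightedCoeff (q ^ 2) (qExp (q ^ 2) x * qExp (q ^ 2) (q * z)) k
      - √(1 - (q ^ 2) ^ k) *
        weightedCoeff (q ^ 2) (qExp (q ^ 2) x * qExp (q ^ 2) (q * z)) (k - 1) := by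
  have hQ0 : 0 ≤ q ^ 2 := sq_nonneg q
  have hQ1 : q ^ 2 < 1 := pow_lt_one₀ hq0 hq1 two_ne_zero
  have hrescale := coeff_rescale (qExp (q ^ 2) (q * x) * qExp (q ^ 2) z) q k
  rw [map_mul, rescale_qExp, rescale_qExp, ← mul_assoc, ← sq,
    coeff_qExp_mul_mul_qExp hQ0 hQ1] at hrescale
  rw [sqrt_one_sub_pow_mul_weightedCoeff_pred hQ0 hQ1]
  simp only [weightedCoeff]
  linear_combination (-(x⁻¹ * √(qPoch (q ^ 2) k))) * hrescale
    - (√(qPoch (q ^ 2) k) * coeff k (X * (qExp (q ^ 2) x * qExp (q ^ 2) (q * z)))) *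
      mul_inv_cancel₀ hx

end weightedCoeff

section lp

open scoped InnerProductSpace ComplexConjugate lp

variable {𝕜 ι : Type*} [RCLike 𝕜] [DecidableEq ι]

lemma lp_apply_eq_inner_star (T : ℓ²(ι, 𝕜) →L[𝕜] ℓ²(ι, 𝕜)) (v : ℓ²(ι, 𝕜)) (k : ι) :
    T v k = ⟪star T (lp.single 2 k 1), v⟫_𝕜 := by
  rw [ContinuousLinearMap.star_eq_adjoint, ContinuousLinearMap.adjoint_inner_left,
    lp.inner_single_left]
  simp

lemma star_apply_of_apply_single_eq_smul {T : ℓ²(ι, 𝕜) →L[𝕜] ℓ²(ι, 𝕜)} {w : ι → 𝕜}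
    (hT : ∀ k, T (lp.single 2 k 1) = w k • lp.single 2 k 1) (v : ℓ²(ι, 𝕜)) (k : ι) :
    star T v k = conj (w k) * v k := by
  rw [lp_apply_eq_inner_star, star_star, hT, inner_smul_left, lp.inner_single_left]
  simp

variable {T : ℓ²(ℕ, 𝕜) →L[𝕜] ℓ²(ℕ, 𝕜)} {w : ℕ → 𝕜}

lemma star_apply_of_apply_single_eq_smul_single_pred
    (hT : ∀ k, T (lp.single 2 k 1) = w k • lp.single 2 (k - 1) 1) (v : ℓ²(ℕ, 𝕜)) (k : ℕ) :
    star T v k = conj (w k) * v (k - 1) := by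
  rw [lp_apply_eq_inner_star, star_star, hT, inner_smul_left, lp.inner_single_left]
  simp

lemma apply_of_apply_single_eq_smul_single_pred
    (hT : ∀ k, T (lp.single 2 k 1) = w k • lp.single 2 (k - 1) 1) (hw : w 0 = 0)
    (v : ℓ²(ℕ, 𝕜)) (k : ℕ) : T v k = w (k + 1) * v (k + 1) := by
  have hstar : star T (lp.single 2 k 1) = conj (w (k + 1)) • lp.single 2 (k + 1) 1 := by
    ext j
    rw [star_apply_of_apply_single_eq_smul_single_pred hT, lp.coeFn_smul, Pi.smul_apply,
      lp.single_apply, lp.single_apply]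
    rcases j with _ | j
    · simp [hw, Pi.single_apply]
    · by_cases hjk : j = k <;> simp [hjk]
  rw [lp_apply_eq_inner_star, hstar, inner_smul_left, lp.inner_single_left]
  simp

end lp

section qExpVectors

open scoped lp

variable {Q x y : ℝ}

lemma exists_lp_apply_eq_weightedCoeff_qExp_mul_qExp (hQ0 : 0 ≤ Q) (hQ1 : Q < 1) (hx0 : 0 ≤ x)
    (hx1 : x < 1) (hy0 : 0 ≤ y) (hy1 : y < 1) :
    ∃ v : ℓ²(ℕ, ℂ), ∀ k, v k = (weightedCoeff Q (qExp Q x * qExp Q y) k : ℂ) :=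
  ⟨⟨_, memℓp_weightedCoeff hQ0 hQ1 (summable_coeff_qExp_mul_qExp hQ0 hQ1 hx0 hx1 hy0 hy1)⟩,
    fun _ => rfl⟩

lemma ne_zero_of_apply_eq_weightedCoeff_qExp_mul_qExp {v : ℓ²(ℕ, ℂ)}
    (hv : ∀ k, v k = (weightedCoeff Q (qExp Q x * qExp Q y) k : ℂ)) : v ≠ 0 := by
  rintro rfl
  simpa [weightedCoeff, coeff_zero_qExp_mul_qExp] using hv 0

variable {A : ℓ²(ℕ, ℂ) →L[ℂ] ℓ²(ℕ, ℂ)} {v : ℓ²(ℕ, ℂ)}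

lemma eigen_of_apply_eq_weightedCoeff_qExp_mul_qExp (hQ0 : 0 ≤ Q) (hQ1 : Q < 1)
    (hA : ∀ k, A (lp.single 2 k 1) = ((√(1 - Q ^ k) : ℝ) : ℂ) • lp.single 2 (k - 1) 1)
    (hx : x ≠ 0) (hv : ∀ k, v k = (weightedCoeff Q (qExp Q x * qExp Q y) k : ℂ)) :
    ((1 + y / x : ℝ) : ℂ) • v - ((x⁻¹ : ℝ) : ℂ) • A v - (y : ℂ) • star A v = 0 := by
  ext k
  simp only [lp.coeFn_sub, lp.coeFn_smul, Pi.sub_apply, Pi.smul_apply, smul_eq_mul,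
    apply_of_apply_single_eq_smul_single_pred hA (by simp),
    star_apply_of_apply_single_eq_smul_single_pred hA, Complex.conj_ofReal, hv, lp.coeFn_zero,
    Pi.zero_apply]
  exact_mod_cast congrArg Complex.ofReal (weightedCoeff_qExp_mul_qExp_eigen hQ0 hQ1 hx y k)

lemma star_smul_eq_of_apply_eq_weightedCoeff_qExp_mul_qExp {q z : ℝ} (hq0 : 0 ≤ q) (hq1 : q < 1)
    (hA : ∀ k, A (lp.single 2 k 1) = ((√(1 - (q ^ 2) ^ k) : ℝ) : ℂ) • lp.single 2 (k - 1) 1)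
    {S : ℓ²(ℕ, ℂ) →L[ℂ] ℓ²(ℕ, ℂ)} (hS : ∀ k, S (lp.single 2 k 1) = (q : ℂ) ^ k • lp.single 2 k 1)
    (hx : x ≠ 0)
    (hv : ∀ k, v k = (weightedCoeff (q ^ 2) (qExp (q ^ 2) x * qExp (q ^ 2) (q * z)) k : ℂ))
    {w : ℓ²(ℕ, ℂ)}
    (hw : ∀ k, w k = (weightedCoeff (q ^ 2) (qExp (q ^ 2) (q * x) * qExp (q ^ 2) z) k : ℂ)) :
    star S (((x⁻¹ : ℝ) : ℂ) • w) = ((x⁻¹ : ℝ) : ℂ) • v - star A v := by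
  ext k
  simp only [lp.coeFn_sub, lp.coeFn_smul, Pi.sub_apply, Pi.smul_apply, smul_eq_mul,
    star_apply_of_apply_single_eq_smul hS, star_apply_of_apply_single_eq_smul_single_pred hA,
    map_pow, Complex.conj_ofReal, hv, hw]
  exact_mod_cast congrArg Complex.ofReal (pow_mul_weightedCoeff_qExp_mul_qExp hq0 hq1 hx z k)

end qExpVectors

theorem exists_nonzero_solution_case_p_sq_lt_q_general
    (q p : ℝ) (hq0 : 0 < q) (hqp : q < p) (hp1 : p < 1)
    (α γ : lp (fun _ : ℕ => ℂ) 2 →L[ℂ] lp (fun _ : ℕ => ℂ) 2)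
    (hα0 : α (lp.single 2 0 (1 : ℂ)) = 0)
    (hαk : ∀ k : ℕ, 1 ≤ k →
      α (lp.single 2 k (1 : ℂ)) =
        ((Real.sqrt (1 - q ^ (2 * k)) : ℝ) : ℂ) • lp.single 2 (k - 1) (1 : ℂ))
    (hγ : ∀ l : ℕ, γ (lp.single 2 l (1 : ℂ)) = ((q : ℂ) ^ l) • lp.single 2 l (1 : ℂ)) :
    ∃ v₁₂ v₃₂ : lp (fun _ : ℕ => ℂ) 2, v₁₂ ≠ 0 ∧ v₃₂ ≠ 0 ∧
      (((1 + q ^ 3 / p ^ 4 : ℝ) : ℂ) • v₁₂ - (((p ^ 2)⁻¹ : ℝ) : ℂ) • α v₁₂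
        - ((q ^ 3 / p ^ 2 : ℝ) : ℂ) • (star α) v₁₂ = 0) ∧
      (star γ) v₃₂ = (((p ^ 2)⁻¹ : ℝ) : ℂ) • v₁₂ - (star α) v₁₂ := by
  have hp0 : 0 < p := hq0.trans hqp
  have hq1 : q < 1 := hqp.trans hp1
  have hQ0 : 0 ≤ q ^ 2 := sq_nonneg q
  have hQ1 : q ^ 2 < 1 := pow_lt_one₀ hq0.le hq1 two_ne_zero
  have hx1 : p ^ 2 < 1 := pow_lt_one₀ hp0.le hp1 two_ne_zero
  have hz1 : q ^ 2 / p ^ 2 < 1 :=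
    (div_lt_one (by positivity)).2 (pow_lt_pow_left₀ hqp hq0.le two_ne_zero)
  have hα : ∀ k, α (lp.single 2 k 1) = ((√(1 - (q ^ 2) ^ k) : ℝ) : ℂ) • lp.single 2 (k - 1) 1 := by
    rintro (_ | k)
    · simp [hα0]
    · rw [hαk _ k.succ_pos, pow_mul]
  obtain ⟨v, hv⟩ := exists_lp_apply_eq_weightedCoeff_qExp_mul_qExp hQ0 hQ1 (by positivity) hx1
    (by positivity) (mul_lt_one_of_nonneg_of_lt_one_left hq0.le hq1 hz1.le)
  obtain ⟨w, hw⟩ := exists_lp_apply_eq_weightedCoeff_qExp_mul_qExp hQ0 hQ1 (by positivity)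
    (mul_lt_one_of_nonneg_of_lt_one_left hq0.le hq1 hx1.le) (by positivity) hz1
  have heigen := eigen_of_apply_eq_weightedCoeff_qExp_mul_qExp hQ0 hQ1 hα (by positivity) hv
  rw [show q * (q ^ 2 / p ^ 2) = q ^ 3 / p ^ 2 by ring,
    show 1 + q ^ 3 / p ^ 2 / p ^ 2 = 1 + q ^ 3 / p ^ 4 by ring] at heigen
  refine ⟨v, _, ne_zero_of_apply_eq_weightedCoeff_qExp_mul_qExp hv,
    smul_ne_zero (by simp [hp0.ne']) (ne_zero_of_apply_eq_weightedCoeff_qExp_mul_qExp hw), heigen,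
    star_smul_eq_of_apply_eq_weightedCoeff_qExp_mul_qExp hq0.le hq1 hα hγ (by positivity) hv hw⟩

/-- For `0 < q < p < 1` with `p² < q`, the system
`[(1 + q³/p⁴) I − (1/p²) α − (q³/p²) α*] v₁₂ = 0`, `γ* v₃₂ = ((1/p²) I − α*) v₁₂`
has a solution by nonzero vectors `v₁₂, v₃₂ ∈ ℓ²(ℕ₀)`, where `α, γ` are the standard
`SU_q(2)` operators on `ℓ²(ℕ₀)`. -/
theorem exists_nonzero_solution_case_p_sq_lt_q
    (q p : ℝ) (hq0 : 0 < q) (hqp : q < p) (hp1 : p < 1) (hpq : p ^ 2 < q)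
    (α γ : lp (fun _ : ℕ => ℂ) 2 →L[ℂ] lp (fun _ : ℕ => ℂ) 2)
    (hα0 : α (lp.single 2 0 (1 : ℂ)) = 0)
    (hαk : ∀ k : ℕ, 1 ≤ k →
      α (lp.single 2 k (1 : ℂ)) =
        ((Real.sqrt (1 - q ^ (2 * k)) : ℝ) : ℂ) • lp.single 2 (k - 1) (1 : ℂ))
    (hγ : ∀ l : ℕ, γ (lp.single 2 l (1 : ℂ)) = ((q : ℂ) ^ l) • lp.single 2 l (1 : ℂ))
    (hsa : IsSelfAdjoint γ)
    (h1 : α * γ = (q : ℂ) • (γ * α))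
    (h2 : α * star γ = (q : ℂ) • (star γ * α))
    (h3 : star γ * γ = γ * star γ)
    (h4 : star α * α + star γ * γ = 1)
    (h5 : α * star α + ((q : ℂ) ^ 2) • (star γ * γ) = 1) :
    ∃ v₁₂ v₃₂ : lp (fun _ : ℕ => ℂ) 2, v₁₂ ≠ 0 ∧ v₃₂ ≠ 0 ∧
      (((1 + q ^ 3 / p ^ 4 : ℝ) : ℂ) • v₁₂ - (((p ^ 2)⁻¹ : ℝ) : ℂ) • α v₁₂
        - ((q ^ 3 / p ^ 2 : ℝ) : ℂ) • (star α) v₁₂ = 0) ∧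
      (star γ) v₃₂ = (((p ^ 2)⁻¹ : ℝ) : ℂ) • v₁₂ - (star α) v₁₂ :=
  exists_nonzero_solution_case_p_sq_lt_q_general q p hq0 hqp hp1 α γ hα0 hαk hγ
end
end

section
/- Let 0 < q < p < 1 with p² > q. Then there exist nonzero vectors v_{21}, v_{23} ∈ ℓ²(ℕ₀) such that [(1 + p⁴/q) I − (p²/q²) α − q p² α*] v_{23} = 0 and γ* v_{21} = (1/p²)(I − (p²/q²) α) v_{23}. -/
/-!
Write `v₂₃ = ∑ c_k e_k` and `ω_k = √(1 - q^{2(k+1)})`, so that `α e_{k+1} = ω_k e_k`. The first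
equation is a three-term recurrence for `c`; the substitution `c_k = d_k / (ω_0 ⋯ ω_{k-1})` turns it
into `d_{k+2} = (a + b) d_{k+1} - a b (1 - q^{2(k+1)}) d_k` with `a = q p²` and `b = q² / p²`, a
decaying perturbation of the recurrence with characteristic roots `a` and `b`. Both roots are
smaller than `q` precisely because `q < p² < 1`. For `r` strictly between `max a b` and `q`, the
quantity `N_k = (r - a) d_k + (d_{k+1} - b d_k)` eventually contracts by the factor `r`, so by the
ratio test `N_k / (q^k ω_0 ⋯ ω_{k-1})` is summable, and it dominates both `d_k / (ω_0 ⋯ ω_{k-1})`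
and `(d_{k+1} - b d_k) / (q^k ω_0 ⋯ ω_{k-1})` up to constants. This puts `v₂₃` in `ℓ²`; as `γ`
is diagonal with eigenvalues `q^l`, the second equation determines `v₂₁` coordinatewise, with
coefficients `-(d_{l+1} - b d_l) / (q^{l+2} ω_0 ⋯ ω_{l-1})`.
-/

open Filter Topology Finset ComplexConjugate
open scoped InnerProductSpace

local notation "ℓ²" => lp (fun _ : ℕ => ℂ) 2

theorem summable_div_pow_mul_prod_of_ratio {N ω : ℕ → ℝ} {r t : ℝ} (hN : ∀ k, 0 ≤ N k)
    (hω : ∀ k, 0 < ω k) (hω1 : Tendsto ω atTop (𝓝 1)) (hr : 0 ≤ r) (hrt : r < t)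
    (hNr : ∀ᶠ k in atTop, N (k + 1) ≤ r * N k) :
    Summable fun k => N k / (t ^ k * ∏ j ∈ range k, ω j) := by
  have ht : 0 < t := hr.trans_lt hrt
  obtain ⟨l, hrl, hl1⟩ := exists_between ((div_lt_one ht).2 hrt)
  have hωl : ∀ᶠ k in atTop, r ≤ l * t * ω k := by
    refine (hω1.const_mul (l * t)).eventually_const_le ?_
    rwa [mul_one, ← div_lt_iff₀ ht]
  have hP : ∀ n, 0 < t ^ n * ∏ j ∈ range n, ω j := fun n =>
    mul_pos (pow_pos ht n) (prod_pos fun j _ => hω j)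
  refine summable_of_ratio_norm_eventually_le hl1 ?_
  filter_upwards [hNr, hωl] with k hNk hωk
  have htω : 0 < t * ω k := mul_pos ht (hω k)
  rw [Real.norm_of_nonneg (div_nonneg (hN _) (hP _).le),
    Real.norm_of_nonneg (div_nonneg (hN _) (hP _).le), prod_range_succ, pow_succ,
    mul_mul_mul_comm]
  calc N (k + 1) / (t ^ k * (∏ j ∈ range k, ω j) * (t * ω k))
      ≤ l * (t * ω k) * N k / (t ^ k * (∏ j ∈ range k, ω j) * (t * ω k)) := by
        refine div_le_div_of_nonneg_right ?_ (mul_pos (hP k) htω).le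
        nlinarith [hN k]
    _ = l * (N k / (t ^ k * ∏ j ∈ range k, ω j)) := by
        rw [mul_right_comm, mul_div_mul_right _ _ htω.ne', mul_div_assoc]

noncomputable def perturbedRec (a b : ℝ) (x : ℕ → ℝ) : ℕ → ℝ
  | 0 => 1
  | 1 => a + b
  | k + 2 => (a + b) * perturbedRec a b x (k + 1) - a * b * (1 - x k) * perturbedRec a b x k

noncomputable def sqrtOneSubProd (x : ℕ → ℝ) (k : ℕ) : ℝ := ∏ j ∈ range k, √(1 - x j)

noncomputable def normalizedRec (a b : ℝ) (x : ℕ → ℝ) (k : ℕ) : ℝ :=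
  perturbedRec a b x k / sqrtOneSubProd x k

section PerturbedRec

variable {a b t : ℝ} {x : ℕ → ℝ}

local notation "d" => perturbedRec a b x
local notation "F" => sqrtOneSubProd x
local notation "c" => normalizedRec a b x

theorem perturbedRec_add_two_sub (k : ℕ) :
    d (k + 2) - b * d (k + 1) = a * (d (k + 1) - b * d k) + a * b * x k * d k := by
  simp only [perturbedRec]; ring

theorem perturbedRec_nonneg (ha : 0 ≤ a) (hb : 0 ≤ b) (hx : ∀ k, 0 ≤ x k) (k : ℕ) :
    0 ≤ d k ∧ 0 ≤ d (k + 1) - b * d k := by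
  induction k with
  | zero => simp [perturbedRec, ha]
  | succ k ih =>
    obtain ⟨hd, hs⟩ := ih
    refine ⟨by nlinarith, ?_⟩
    rw [perturbedRec_add_two_sub]
    have := hx k
    positivity

theorem perturbedRec_lyapunov_le {r : ℝ} {k : ℕ} (hd : 0 ≤ d k)
    (hk : a * b * x k ≤ (r - a) * (r - b)) :
    (r - a) * d (k + 1) + (d (k + 2) - b * d (k + 1)) ≤
      r * ((r - a) * d k + (d (k + 1) - b * d k)) := by
  have h := perturbedRec_add_two_sub (a := a) (b := b) (x := x) k
  nlinarith [mul_nonneg hd (sub_nonneg.2 hk)]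

theorem sqrtOneSubProd_pos (hx1 : ∀ k, x k < 1) (k : ℕ) : 0 < F k :=
  prod_pos fun j _ => Real.sqrt_pos.2 (sub_pos.2 (hx1 j))

theorem summable_perturbedRec (ha : 0 ≤ a) (hb : 0 ≤ b) (hat : a < t) (hbt : b < t)
    (hx0 : ∀ k, 0 ≤ x k) (hx1 : ∀ k, x k < 1) (hx : Tendsto x atTop (𝓝 0)) :
    (Summable fun k => d k / (t ^ k * F k)) ∧
      Summable fun k => (d (k + 1) - b * d k) / (t ^ k * F k) := by
  obtain ⟨r, hr, hrt⟩ := exists_between (max_lt hat hbt)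
  have har : a < r := (le_max_left a b).trans_lt hr
  have hbr : b < r := (le_max_right a b).trans_lt hr
  have hnn := perturbedRec_nonneg ha hb hx0
  have hN : ∀ k, 0 ≤ (r - a) * d k + (d (k + 1) - b * d k) := fun k =>
    add_nonneg (mul_nonneg (sub_nonneg.2 har.le) (hnn k).1) (hnn k).2
  have hsmall : ∀ᶠ k in atTop, a * b * x k ≤ (r - a) * (r - b) :=
    (hx.const_mul (a * b)).eventually_le_const (by
      rw [mul_zero]; exact mul_pos (sub_pos.2 har) (sub_pos.2 hbr))
  have hω1 : Tendsto (fun k => √(1 - x k)) atTop (𝓝 1) := by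
    simpa using (hx.const_sub 1).sqrt
  have hG : Summable fun k => ((r - a) * d k + (d (k + 1) - b * d k)) / (t ^ k * F k) :=
    summable_div_pow_mul_prod_of_ratio hN
    (fun k => Real.sqrt_pos.2 (sub_pos.2 (hx1 k))) hω1 (ha.trans har.le) hrt
    (hsmall.mono fun k hk => perturbedRec_lyapunov_le (hnn k).1 hk)
  have hP : ∀ k, 0 < t ^ k * F k := fun k =>
    mul_pos (pow_pos (ha.trans_lt hat) k) (sqrtOneSubProd_pos hx1 k)
  constructor
  · refine (hG.div_const (r - a)).of_nonneg_of_le (fun k => div_nonneg (hnn k).1 (hP k).le)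
      fun k => ?_
    rw [div_right_comm]
    refine div_le_div_of_nonneg_right ?_ (hP k).le
    rw [le_div_iff₀ (sub_pos.2 har)]
    linarith [(hnn k).2]
  · refine hG.of_nonneg_of_le (fun k => div_nonneg (hnn k).2 (hP k).le) fun k => ?_
    refine div_le_div_of_nonneg_right ?_ (hP k).le
    linarith [mul_nonneg (sub_nonneg.2 har.le) (hnn k).1]

theorem normalizedRec_zero : c 0 = 1 := by
  simp [normalizedRec, perturbedRec, sqrtOneSubProd]

theorem sqrt_mul_normalizedRec_succ (hx1 : ∀ k, x k < 1) (k : ℕ) :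
    √(1 - x k) * c (k + 1) = d (k + 1) / F k := by
  have := sqrtOneSubProd_pos hx1 k
  have := Real.sqrt_pos.2 (sub_pos.2 (hx1 k))
  rw [normalizedRec, sqrtOneSubProd, prod_range_succ, ← sqrtOneSubProd]
  field_simp

theorem add_mul_normalizedRec_zero (hx1 : ∀ k, x k < 1) :
    (a + b) * c 0 = √(1 - x 0) * c 1 := by
  rw [sqrt_mul_normalizedRec_succ hx1, normalizedRec_zero]
  simp [perturbedRec, sqrtOneSubProd]

theorem add_mul_normalizedRec_succ (hx1 : ∀ k, x k < 1) (k : ℕ) :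
    (a + b) * c (k + 1) = √(1 - x (k + 1)) * c (k + 2) + a * b * (√(1 - x k) * c k) := by
  have hF := sqrtOneSubProd_pos hx1 k
  have hω := Real.sqrt_pos.2 (sub_pos.2 (hx1 k))
  have hω2 := Real.sq_sqrt (sub_pos.2 (hx1 k)).le
  rw [sqrt_mul_normalizedRec_succ hx1, normalizedRec, normalizedRec, sqrtOneSubProd,
    prod_range_succ, ← sqrtOneSubProd]
  simp only [perturbedRec]
  field_simp
  linear_combination (-(a * b * perturbedRec a b x k)) * hω2

theorem normalizedRec_sub_inv_mul (hb : b ≠ 0) (hx1 : ∀ k, x k < 1) (k : ℕ) :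
    c k - b⁻¹ * (√(1 - x k) * c (k + 1)) = -b⁻¹ * ((d (k + 1) - b * d k) / F k) := by
  have := sqrtOneSubProd_pos hx1 k
  rw [sqrt_mul_normalizedRec_succ hx1, normalizedRec]
  field_simp
  ring

theorem normalizedRec_sub_inv_mul_zero (hb : b ≠ 0) (hx1 : ∀ k, x k < 1) :
    c 0 - b⁻¹ * (√(1 - x 0) * c 1) = -(a / b) := by
  rw [sqrt_mul_normalizedRec_succ hx1, normalizedRec_zero]
  simp only [perturbedRec, sqrtOneSubProd, range_zero, prod_empty, div_one]
  field_simp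
  ring

theorem summable_abs_normalizedRec (ha : 0 ≤ a) (hb : 0 ≤ b) (ha1 : a < 1) (hb1 : b < 1)
    (hx0 : ∀ k, 0 ≤ x k) (hx1 : ∀ k, x k < 1) (hx : Tendsto x atTop (𝓝 0)) :
    Summable fun k => |c k| := by
  refine (summable_perturbedRec ha hb ha1 hb1 hx0 hx1 hx).1.congr fun k => ?_
  rw [one_pow, one_mul, normalizedRec, abs_of_nonneg
    (div_nonneg (perturbedRec_nonneg ha hb hx0 k).1 (sqrtOneSubProd_pos hx1 k).le)]

theorem summable_normalizedRec_sub_inv_mul_div (ha : 0 ≤ a) (hb : 0 < b) (hat : a < t)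
    (hbt : b < t) (hx0 : ∀ k, 0 ≤ x k) (hx1 : ∀ k, x k < 1) (hx : Tendsto x atTop (𝓝 0)) :
    Summable fun k => (c k - b⁻¹ * (√(1 - x k) * c (k + 1))) / t ^ k := by
  refine ((summable_perturbedRec ha hb.le hat hbt hx0 hx1 hx).2.mul_left (-b⁻¹)).congr
    fun k => ?_
  rw [normalizedRec_sub_inv_mul hb.ne' hx1]
  ring

end PerturbedRec

theorem memℓp_of_summable_norm {ι : Type*} {E : ι → Type*} [∀ i, NormedAddCommGroup (E i)]
    {p : ENNReal} (hp : 1 ≤ p) {f : ∀ i, E i} (hf : Summable fun i => ‖f i‖) : Memℓp f p :=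
  (memℓp_gen (p := 1) (by simpa using hf)).of_exponent_ge hp

noncomputable def lpOfSummableAbs (f : ℕ → ℝ) (hf : Summable fun k => |f k|) : ℓ² :=
  ⟨fun k => (f k : ℂ), memℓp_of_summable_norm one_le_two (by simpa using hf)⟩

theorem lpOfSummableAbs_apply (f : ℕ → ℝ) (hf : Summable fun k => |f k|) (k : ℕ) :
    lpOfSummableAbs f hf k = f k := rfl

theorem lpOfSummableAbs_ne_zero {f : ℕ → ℝ} (hf : Summable fun k => |f k|) {k : ℕ}
    (hk : f k ≠ 0) : lpOfSummableAbs f hf ≠ 0 := fun h => by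
  have hk0 := congrArg (fun v : ℓ² => v k) h
  simp only [lpOfSummableAbs_apply, lp.coeFn_zero, Pi.zero_apply, Complex.ofReal_eq_zero] at hk0
  exact hk hk0

theorem lp_apply_eq_inner (v : ℓ²) (k : ℕ) : v k = ⟪lp.single 2 k (1 : ℂ), v⟫_ℂ := by
  simp [lp.inner_single_left]

theorem star_apply_apply (T : ℓ² →L[ℂ] ℓ²) (v : ℓ²) (k : ℕ) :
    (star T) v k = ⟪T (lp.single 2 k 1), v⟫_ℂ := by
  rw [lp_apply_eq_inner, ContinuousLinearMap.star_eq_adjoint,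
    ContinuousLinearMap.adjoint_inner_right]

theorem star_apply_of_diagonal {γ : ℓ² →L[ℂ] ℓ²} {μ : ℕ → ℂ}
    (hγ : ∀ l, γ (lp.single 2 l 1) = μ l • lp.single 2 l 1) (v : ℓ²) (l : ℕ) :
    (star γ) v l = conj (μ l) * v l := by
  rw [star_apply_apply, hγ, inner_smul_left, ← lp_apply_eq_inner]

section WeightedShift

variable {α : ℓ² →L[ℂ] ℓ²} {ω : ℕ → ℂ}

theorem star_apply_zero_of_shift (hα0 : α (lp.single 2 0 1) = 0) (v : ℓ²) :
    (star α) v 0 = 0 := by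
  rw [star_apply_apply, hα0, inner_zero_left]

theorem star_apply_succ_of_shift (hα : ∀ k, α (lp.single 2 (k + 1) 1) = ω k • lp.single 2 k 1)
    (v : ℓ²) (k : ℕ) : (star α) v (k + 1) = conj (ω k) * v k := by
  rw [star_apply_apply, hα, inner_smul_left, ← lp_apply_eq_inner]

theorem star_single_of_shift (hα0 : α (lp.single 2 0 1) = 0)
    (hα : ∀ k, α (lp.single 2 (k + 1) 1) = ω k • lp.single 2 k 1) (k : ℕ) :
    (star α) (lp.single 2 k 1) = conj (ω k) • lp.single 2 (k + 1) 1 := by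
  ext j
  rcases j with _ | j
  · simp [star_apply_zero_of_shift hα0]
  · rw [star_apply_succ_of_shift hα, lp.coeFn_smul, Pi.smul_apply, lp.single_apply,
      lp.single_apply]
    by_cases hjk : j = k
    · subst hjk; simp
    · simp [hjk]

theorem apply_of_shift (hα0 : α (lp.single 2 0 1) = 0)
    (hα : ∀ k, α (lp.single 2 (k + 1) 1) = ω k • lp.single 2 k 1) (v : ℓ²) (k : ℕ) :
    α v k = ω k * v (k + 1) := by
  rw [← star_star α, star_apply_apply, star_single_of_shift hα0 hα, inner_smul_left,
    ← lp_apply_eq_inner, Complex.conj_conj]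

end WeightedShift

section Coefficients

variable {q p : ℝ}

noncomputable def coeff₂₃ (q p : ℝ) : ℕ → ℝ :=
  normalizedRec (q * p ^ 2) (q ^ 2 / p ^ 2) fun k => q ^ (2 * (k + 1))

noncomputable def coeff₂₁ (q p : ℝ) (l : ℕ) : ℝ :=
  (p ^ 2)⁻¹ * (coeff₂₃ q p l - p ^ 2 / q ^ 2 * (√(1 - q ^ (2 * (l + 1))) * coeff₂₃ q p (l + 1)))
    / q ^ l

theorem pow_two_mul_succ_lt_one (hq0 : 0 ≤ q) (hq1 : q < 1) (k : ℕ) : q ^ (2 * (k + 1)) < 1 :=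
  pow_lt_one₀ hq0 hq1 (by omega)

theorem tendsto_pow_two_mul_succ (hq0 : 0 ≤ q) (hq1 : q < 1) :
    Tendsto (fun k : ℕ => q ^ (2 * (k + 1))) atTop (𝓝 0) := by
  simp_rw [pow_mul]
  exact (tendsto_pow_atTop_nhds_zero_of_lt_one (sq_nonneg q) (by nlinarith)).comp
    (tendsto_add_atTop_nat 1)

theorem coeff₂₃_zero : coeff₂₃ q p 0 = 1 := normalizedRec_zero

theorem one_add_pow_four_div_eq (hq : q ≠ 0) (hp : p ≠ 0) :
    1 + p ^ 4 / q = p ^ 2 / q ^ 2 * (q * p ^ 2 + q ^ 2 / p ^ 2) := by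
  field_simp; ring

theorem coeff₂₃_recurrence_zero (hq0 : 0 < q) (hq1 : q < 1) (hp : p ≠ 0) :
    (1 + p ^ 4 / q) * coeff₂₃ q p 0 - p ^ 2 / q ^ 2 * (√(1 - q ^ 2) * coeff₂₃ q p 1) = 0 := by
  have h : (q * p ^ 2 + q ^ 2 / p ^ 2) * coeff₂₃ q p 0 = √(1 - q ^ (2 * (0 + 1))) * coeff₂₃ q p 1 :=
    add_mul_normalizedRec_zero (pow_two_mul_succ_lt_one hq0.le hq1)
  rw [zero_add, mul_one] at h
  linear_combination coeff₂₃ q p 0 * one_add_pow_four_div_eq hq0.ne' hp + (p ^ 2 / q ^ 2) * h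

theorem coeff₂₃_recurrence_succ (hq0 : 0 < q) (hq1 : q < 1) (hp : p ≠ 0) (k : ℕ) :
    (1 + p ^ 4 / q) * coeff₂₃ q p (k + 1)
      - p ^ 2 / q ^ 2 * (√(1 - q ^ (2 * (k + 1 + 1))) * coeff₂₃ q p (k + 1 + 1))
      - q * p ^ 2 * (√(1 - q ^ (2 * (k + 1))) * coeff₂₃ q p k) = 0 := by
  have h : (q * p ^ 2 + q ^ 2 / p ^ 2) * coeff₂₃ q p (k + 1) =
      √(1 - q ^ (2 * (k + 1 + 1))) * coeff₂₃ q p (k + 1 + 1)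
        + q * p ^ 2 * (q ^ 2 / p ^ 2) * (√(1 - q ^ (2 * (k + 1))) * coeff₂₃ q p k) :=
    add_mul_normalizedRec_succ (pow_two_mul_succ_lt_one hq0.le hq1) k
  have hprod : q * p ^ 2 = p ^ 2 / q ^ 2 * (q * p ^ 2 * (q ^ 2 / p ^ 2)) := by
    field_simp
  linear_combination coeff₂₃ q p (k + 1) * one_add_pow_four_div_eq hq0.ne' hp
    + (p ^ 2 / q ^ 2) * h - (√(1 - q ^ (2 * (k + 1))) * coeff₂₃ q p k) * hprod

theorem pow_mul_coeff₂₁ (hq : q ≠ 0) (l : ℕ) :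
    q ^ l * coeff₂₁ q p l =
      (p ^ 2)⁻¹ * (coeff₂₃ q p l - p ^ 2 / q ^ 2 * (√(1 - q ^ (2 * (l + 1))) * coeff₂₃ q p (l + 1)))
    := by
  rw [coeff₂₁]
  field_simp

theorem coeff₂₁_zero_ne_zero (hq0 : 0 < q) (hq1 : q < 1) (hp : p ≠ 0) : coeff₂₁ q p 0 ≠ 0 := by
  have hb : q ^ 2 / p ^ 2 ≠ 0 := by positivity
  have h := normalizedRec_sub_inv_mul_zero (a := q * p ^ 2) hb
    (pow_two_mul_succ_lt_one hq0.le hq1)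
  rw [inv_div] at h
  simp only [coeff₂₁, coeff₂₃, zero_add, h, pow_zero, div_one]
  have : q * p ^ 2 / (q ^ 2 / p ^ 2) ≠ 0 := by positivity
  exact mul_ne_zero (by positivity) (neg_ne_zero.2 this)

theorem summable_abs_coeff₂₃ (hq0 : 0 < q) (hqp : q < p) (hp1 : p < 1) :
    Summable fun k => |coeff₂₃ q p k| := by
  have hq1 : q < 1 := hqp.trans hp1
  have hp0 : 0 < p := hq0.trans hqp
  have hp2 : p ^ 2 < 1 := pow_lt_one₀ hp0.le hp1 two_ne_zero
  exact summable_abs_normalizedRec (by positivity) (by positivity)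
    (mul_lt_one_of_nonneg_of_lt_one_left hq0.le hq1 hp2.le)
    (by rw [div_lt_one (by positivity)]; nlinarith) (fun k => by positivity)
    (pow_two_mul_succ_lt_one hq0.le hq1) (tendsto_pow_two_mul_succ hq0.le hq1)

theorem summable_abs_coeff₂₁ (hq0 : 0 < q) (hqp : q < p) (hp1 : p < 1) (hpq : q < p ^ 2) :
    Summable fun l => |coeff₂₁ q p l| := by
  have hq1 : q < 1 := hqp.trans hp1
  have hp0 : 0 < p := hq0.trans hqp
  have hp2 : p ^ 2 < 1 := pow_lt_one₀ hp0.le hp1 two_ne_zero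
  have hS := summable_normalizedRec_sub_inv_mul_div (t := q) (a := q * p ^ 2)
    (b := q ^ 2 / p ^ 2) (by positivity) (by positivity) (mul_lt_of_lt_one_right hq0 hp2)
    (by rw [div_lt_iff₀ (by positivity)]; nlinarith) (fun k => by positivity)
    (pow_two_mul_succ_lt_one hq0.le hq1) (tendsto_pow_two_mul_succ hq0.le hq1)
  refine (hS.mul_left (p ^ 2)⁻¹).abs.congr fun l => ?_
  rw [coeff₂₁, inv_div, mul_div_assoc]
  rfl

end Coefficients

theorem exists_nonzero_solution_case_p_sq_gt_q_general
    (q p : ℝ) (hq0 : 0 < q) (hqp : q < p) (hp1 : p < 1) (hpq : q < p ^ 2)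
    (α γ : lp (fun _ : ℕ => ℂ) 2 →L[ℂ] lp (fun _ : ℕ => ℂ) 2)
    (hα0 : α (lp.single 2 0 (1 : ℂ)) = 0)
    (hαk : ∀ k : ℕ, 1 ≤ k →
      α (lp.single 2 k (1 : ℂ)) =
        ((Real.sqrt (1 - q ^ (2 * k)) : ℝ) : ℂ) • lp.single 2 (k - 1) (1 : ℂ))
    (hγ : ∀ l : ℕ, γ (lp.single 2 l (1 : ℂ)) = ((q : ℂ) ^ l) • lp.single 2 l (1 : ℂ)) :
    ∃ v₂₁ v₂₃ : lp (fun _ : ℕ => ℂ) 2, v₂₁ ≠ 0 ∧ v₂₃ ≠ 0 ∧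
      (((1 + p ^ 4 / q : ℝ) : ℂ) • v₂₃ - ((p ^ 2 / q ^ 2 : ℝ) : ℂ) • α v₂₃
        - ((q * p ^ 2 : ℝ) : ℂ) • (star α) v₂₃ = 0) ∧
      (star γ) v₂₁ = (((p ^ 2)⁻¹ : ℝ) : ℂ) • (v₂₃ - ((p ^ 2 / q ^ 2 : ℝ) : ℂ) • α v₂₃) := by
  have hq1 : q < 1 := hqp.trans hp1
  have hp : p ≠ 0 := (hq0.trans hqp).ne'
  have hα : ∀ k, α (lp.single 2 (k + 1) 1) =
      ((√(1 - q ^ (2 * (k + 1))) : ℝ) : ℂ) • lp.single 2 k 1 :=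
    fun k => by simpa using hαk (k + 1) (by omega)
  have h₂₃ := summable_abs_coeff₂₃ hq0 hqp hp1
  have h₂₁ := summable_abs_coeff₂₁ hq0 hqp hp1 hpq
  refine ⟨lpOfSummableAbs _ h₂₁, lpOfSummableAbs _ h₂₃,
    lpOfSummableAbs_ne_zero h₂₁ (coeff₂₁_zero_ne_zero hq0 hq1 hp),
    lpOfSummableAbs_ne_zero h₂₃ (k := 0) (by simp [coeff₂₃_zero]), ?_, ?_⟩
  · ext (_ | k) <;> simp only [lp.coeFn_sub, lp.coeFn_smul, Pi.sub_apply, Pi.smul_apply,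
      smul_eq_mul, lp.coeFn_zero, Pi.zero_apply, apply_of_shift hα0 hα, lpOfSummableAbs_apply,
      star_apply_zero_of_shift hα0, star_apply_succ_of_shift hα, Complex.conj_ofReal, zero_add,
      mul_one, mul_zero, sub_zero]
    · exact_mod_cast coeff₂₃_recurrence_zero hq0 hq1 hp
    · exact_mod_cast coeff₂₃_recurrence_succ hq0 hq1 hp k
  · ext l
    simp only [lp.coeFn_sub, lp.coeFn_smul, Pi.sub_apply, Pi.smul_apply, smul_eq_mul,
      apply_of_shift hα0 hα, lpOfSummableAbs_apply, star_apply_of_diagonal hγ, map_pow,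
      Complex.conj_ofReal]
    exact_mod_cast pow_mul_coeff₂₁ hq0.ne' l

/-- For `0 < q < p < 1` with `p² > q`, the system
`[(1 + p⁴/q) I − (p²/q²) α − q p² α*] v₂₃ = 0`, `γ* v₂₁ = (1/p²)(I − (p²/q²) α) v₂₃`
has a solution by nonzero vectors `v₂₁, v₂₃ ∈ ℓ²(ℕ₀)`, where `α, γ` are the standard
`SU_q(2)` operators on `ℓ²(ℕ₀)`. -/
theorem exists_nonzero_solution_case_p_sq_gt_q
    (q p : ℝ) (hq0 : 0 < q) (hqp : q < p) (hp1 : p < 1) (hpq : q < p ^ 2)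
    (α γ : lp (fun _ : ℕ => ℂ) 2 →L[ℂ] lp (fun _ : ℕ => ℂ) 2)
    (hα0 : α (lp.single 2 0 (1 : ℂ)) = 0)
    (hαk : ∀ k : ℕ, 1 ≤ k →
      α (lp.single 2 k (1 : ℂ)) =
        ((Real.sqrt (1 - q ^ (2 * k)) : ℝ) : ℂ) • lp.single 2 (k - 1) (1 : ℂ))
    (hγ : ∀ l : ℕ, γ (lp.single 2 l (1 : ℂ)) = ((q : ℂ) ^ l) • lp.single 2 l (1 : ℂ))
    (hsa : IsSelfAdjoint γ)
    (h1 : α * γ = (q : ℂ) • (γ * α))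
    (h2 : α * star γ = (q : ℂ) • (star γ * α))
    (h3 : star γ * γ = γ * star γ)
    (h4 : star α * α + star γ * γ = 1)
    (h5 : α * star α + ((q : ℂ) ^ 2) • (star γ * γ) = 1) :
    ∃ v₂₁ v₂₃ : lp (fun _ : ℕ => ℂ) 2, v₂₁ ≠ 0 ∧ v₂₃ ≠ 0 ∧
      (((1 + p ^ 4 / q : ℝ) : ℂ) • v₂₃ - ((p ^ 2 / q ^ 2 : ℝ) : ℂ) • α v₂₃
        - ((q * p ^ 2 : ℝ) : ℂ) • (star α) v₂₃ = 0) ∧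
      (star γ) v₂₁ = (((p ^ 2)⁻¹ : ℝ) : ℂ) • (v₂₃ - ((p ^ 2 / q ^ 2 : ℝ) : ℂ) • α v₂₃) :=
  exists_nonzero_solution_case_p_sq_gt_q_general q p hq0 hqp hp1 hpq α γ hα0 hαk hγ
end

section
/- Let d ∈ ℕ and let Q ∈ M_d(ℂ) be a strictly positive diagonal matrix whose diagonal takes exactly n ≥ 2 distinct values, with multiplicities d_1, …, d_n (so d_1 + ⋯ + d_n = d). Then sl_Q(d) is a complex linear subspace of M_d(ℂ) of dimension d_1² + ⋯ + d_n² − 2. -/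
/-!
A matrix commutes with `Q = diagonal q` iff it vanishes off the blocks `{(i, j) | q i = q j}`,
so the commutant has dimension `∑ dᵢ²`. On it, `A ↦ (Tr (A Q), Tr (A Q⁻¹))` is onto `ℂ²`
already on diagonal matrices supported on two indices `j₀, j₁` with `q j₀ ≠ q j₁`: the
determinant of the resulting `2 × 2` system is `q₀/q₁ - q₁/q₀`, nonzero because `q₀² ≠ q₁²`
for positive `q₀ ≠ q₁`. Rank–nullity then gives `dim sl_Q(d) = ∑ dᵢ² - 2`.
-/

open Matrix Module Finset

/-- Cramer's rule for a `2 × 2` system. -/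
theorem exists_mul_add_mul_eq_of_ne {K : Type*} [Field K] {a₀ a₁ b₀ b₁ : K}
    (h : a₀ * b₁ ≠ a₁ * b₀) (y z : K) :
    ∃ s t, s * a₀ + t * a₁ = y ∧ s * b₀ + t * b₁ = z := by
  have hD : a₀ * b₁ - a₁ * b₀ ≠ 0 := sub_ne_zero.mpr h
  refine ⟨(y * b₁ - z * a₁) / (a₀ * b₁ - a₁ * b₀), (z * a₀ - y * b₀) / (a₀ * b₁ - a₁ * b₀),
    ?_, ?_⟩ <;>
  · rw [div_mul_eq_mul_div, div_mul_eq_mul_div, ← add_div, div_eq_iff hD]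
    ring

namespace Matrix

variable {ι K : Type*} [Fintype ι] [DecidableEq ι] [Field K]

theorem inv_diagonal_of_ne_zero {v : ι → K} (hv : ∀ i, v i ≠ 0) :
    (diagonal v)⁻¹ = diagonal v⁻¹ :=
  inv_eq_right_inv <| by
    rw [diagonal_mul_diagonal, ← diagonal_one]
    exact congrArg diagonal (funext fun i => mul_inv_cancel₀ (hv i))

theorem mem_centralizer_singleton_iff {A B : Matrix ι ι K} :
    A ∈ Subalgebra.centralizer K {B} ↔ A * B = B * A := by
  simp only [Subalgebra.mem_centralizer_iff, Set.mem_singleton_iff, forall_eq]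
  exact eq_comm

theorem mem_centralizer_diagonal_iff {q : ι → K} {A : Matrix ι ι K} :
    A ∈ Subalgebra.centralizer K {diagonal q} ↔ ∀ i j, q i ≠ q j → A i j = 0 := by
  rw [mem_centralizer_singleton_iff, ← Matrix.ext_iff]
  refine forall₂_congr fun i j => ?_
  rw [eq_comm, diagonal_mul, mul_diagonal, mul_comm (A i j), ← sub_eq_zero, ← sub_mul, mul_eq_zero,
    sub_eq_zero, or_iff_not_imp_left]

noncomputable def centralizerDiagonalEquiv (q : ι → K) :
    (Subalgebra.centralizer K {diagonal q}).toSubmodule ≃ₗ[K]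
      ({p : ι × ι // q p.1 = q p.2} → K) :=
  open scoped Classical in
  { toFun A p := A.1 p.1.1 p.1.2
    map_add' _ _ := rfl
    map_smul' _ _ := rfl
    invFun f := ⟨of fun i j => if h : q i = q j then f ⟨(i, j), h⟩ else 0,
      mem_centralizer_diagonal_iff.mpr fun i j h => dif_neg h⟩
    left_inv A := by
      ext i j
      by_cases h : q i = q j
      · simp [h]
      · simp [h, mem_centralizer_diagonal_iff.mp A.2 i j h]
    right_inv f := by
      ext p
      simp [p.2] }

theorem finrank_centralizer_diagonal (q : ι → K) :
    finrank K (Subalgebra.centralizer K {diagonal q}) =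
      Nat.card {p : ι × ι // q p.1 = q p.2} := by
  classical
  rw [← Subalgebra.finrank_toSubmodule, (centralizerDiagonalEquiv q).finrank_eq,
    finrank_fintype_fun_eq_card, Nat.card_eq_fintype_card]

noncomputable def traceMulDiagonal (w : ι → K) : Matrix ι ι K →ₗ[K] K :=
  traceLinearMap ι K K ∘ₗ LinearMap.mulRight K (diagonal w)

@[simp]
theorem traceMulDiagonal_apply (w : ι → K) (A : Matrix ι ι K) :
    traceMulDiagonal w A = (A * diagonal w).trace :=
  rfl

theorem surjective_traceMulDiagonal_prod_domRestrict (q a b : ι → K) {j₀ j₁ : ι}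
    (h : a j₀ * b j₁ ≠ a j₁ * b j₀) :
    Function.Surjective (((traceMulDiagonal a).prod (traceMulDiagonal b)).domRestrict
      (Subalgebra.centralizer K {diagonal q}).toSubmodule) := by
  rintro ⟨y, z⟩
  obtain ⟨s, t, hy, hz⟩ := exists_mul_add_mul_eq_of_ne h y z
  refine ⟨⟨diagonal (Pi.single j₀ s + Pi.single j₁ t),
    mem_centralizer_singleton_iff.mpr (commute_diagonal _ _).eq⟩, ?_⟩
  simp [diagonal_mul_diagonal, trace_diagonal, add_mul, sum_add_distrib, Pi.single_apply, hy, hz]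

end Matrix

theorem Submodule.finrank_inf_ker_add_finrank_of_surjective {K M N : Type*} [DivisionRing K]
    [AddCommGroup M] [Module K M] [AddCommGroup N] [Module K N] (C : Submodule K M)
    [FiniteDimensional K C] (f : M →ₗ[K] N) (hf : Function.Surjective (f.domRestrict C)) :
    finrank K ↥(C ⊓ LinearMap.ker f) + finrank K N = finrank K C := by
  have := LinearMap.finrank_range_add_finrank_ker (f.domRestrict C)
  rwa [LinearMap.range_eq_top.mpr hf, finrank_top, LinearMap.ker_domRestrict,
    ← Submodule.finrank_map_subtype_eq, Submodule.map_comap_subtype, add_comm] at this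

theorem Nat.card_pairs_eq_sum_sq_card_fiber {ι κ β : Type*} [Fintype ι] [Fintype κ] [DecidableEq β]
    {f : ι → β} {v : κ → β} (hv : Function.Injective v) (hcover : ∀ j, ∃ i, f j = v i) :
    Nat.card {p : ι × ι // f p.1 = f p.2} = ∑ i, #{j | f j = v i} ^ 2 := by
  rw [Nat.card_eq_fintype_card, Fintype.card_subtype,
    card_eq_sum_card_fiberwise (f := fun p => f p.1) (t := univ.map ⟨v, hv⟩), sum_map]
  · refine sum_congr rfl fun i _ => ?_
    rw [sq, ← card_product]
    congr 1
    ext ⟨j, k⟩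
    simp only [mem_filter, mem_univ, true_and, mem_product, Function.Embedding.coeFn_mk]
    constructor
    · rintro ⟨hjk, hj⟩
      exact ⟨hj, hjk ▸ hj⟩
    · rintro ⟨hj, hk⟩
      exact ⟨hj.trans hk.symm, hj⟩
  · rintro p -
    obtain ⟨i, hi⟩ := hcover p.1
    simp [hi]

/-- For a strictly positive diagonal matrix `Q ∈ M_d(ℂ)` whose diagonal takes exactly
`n ≥ 2` distinct values with multiplicities `d₁, …, d_n`, the set
`sl_Q(d) = {A : AQ = QA, Tr(AQ) = 0, Tr(AQ⁻¹) = 0}` is a complex linear subspace of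
`M_d(ℂ)` of dimension `d₁² + ⋯ + d_n² − 2`. -/
theorem slQ_is_subspace_of_dimension
    (d : ℕ) (qd : Fin d → ℝ) (hpos : ∀ j, 0 < qd j)
    (n : ℕ) (hn : 2 ≤ n) (v : Fin n → ℝ) (hv : Function.Injective v)
    (hcover : ∀ j, ∃ i, qd j = v i) (hattain : ∀ i, ∃ j, qd j = v i)
    (dm : Fin n → ℕ)
    (hdm : ∀ i, dm i = (Finset.univ.filter (fun j => qd j = v i)).card) :
    ∃ S : Submodule ℂ (Matrix (Fin d) (Fin d) ℂ),
      (S : Set (Matrix (Fin d) (Fin d) ℂ)) =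
        {A : Matrix (Fin d) (Fin d) ℂ |
          A * Matrix.diagonal (fun j => (qd j : ℂ)) =
            Matrix.diagonal (fun j => (qd j : ℂ)) * A ∧
          (A * Matrix.diagonal (fun j => (qd j : ℂ))).trace = 0 ∧
          (A * (Matrix.diagonal (fun j => (qd j : ℂ)))⁻¹).trace = 0} ∧
      Module.finrank ℂ S = (∑ i, (dm i) ^ 2) - 2 := by
  set q : Fin d → ℂ := fun j => (qd j : ℂ)
  have hq : ∀ j, q j ≠ 0 := fun j => Complex.ofReal_ne_zero.mpr (hpos j).ne'
  set C := (Subalgebra.centralizer ℂ {diagonal q}).toSubmodule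
  set L := (traceMulDiagonal q).prod (traceMulDiagonal q⁻¹)
  refine ⟨C ⊓ LinearMap.ker L, ?_, ?_⟩
  · ext A
    simp only [C, L, SetLike.mem_coe, Submodule.mem_inf, Subalgebra.mem_toSubmodule,
      mem_centralizer_singleton_iff, LinearMap.mem_ker, LinearMap.prod_apply, Function.prod_apply,
      Prod.mk_eq_zero, traceMulDiagonal_apply, inv_diagonal_of_ne_zero hq, Set.mem_ofPred_eq]
  obtain ⟨j₀, hj₀⟩ := hattain ⟨0, by omega⟩
  obtain ⟨j₁, hj₁⟩ := hattain ⟨1, by omega⟩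
  have hne : qd j₀ ≠ qd j₁ := by
    rw [hj₀, hj₁]
    exact hv.ne (by simp)
  have hdet : q j₀ * q⁻¹ j₁ ≠ q j₁ * q⁻¹ j₀ := by
    simp only [q, Pi.inv_apply, ← Complex.ofReal_inv, ← Complex.ofReal_mul, Ne,
      Complex.ofReal_inj, ← div_eq_mul_inv]
    rw [div_eq_div_iff (hpos j₁).ne' (hpos j₀).ne', ← sq, ← sq, sq_eq_sq₀ (hpos _).le (hpos _).le]
    exact hne
  have hrank := Submodule.finrank_inf_ker_add_finrank_of_surjective C L
    (surjective_traceMulDiagonal_prod_domRestrict q q q⁻¹ hdet)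
  have hC : finrank ℂ C = ∑ i, dm i ^ 2 := by
    rw [Subalgebra.finrank_toSubmodule, finrank_centralizer_diagonal]
    simp only [q, Complex.ofReal_inj]
    rw [Nat.card_pairs_eq_sum_sq_card_fiber hv hcover]
    simp [hdm]
  rw [finrank_prod, finrank_self, hC] at hrank
  omega
end
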